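/- arXiv:1006.1593 — 5 statements merged into one kernel-verified Lean document; each statement's English description precedes it below -/
import Mathlib

section
/- Let a < b be reals with 0 ∉ [a,b], p > 1, q = p/(p-1). Then |(1/a + 1/b)/2 - (ln|b| - ln|a|)/(b-a)| ≤ (b-a)·(1/(p+1))^{1/p}·(1/2)^{1/q}·(|a|^{-2} + |b|^{-2})/2. -/
open Real

/-- Padé lower bound for log: `2(x-1)/(x+1) ≤ log x` for `x ≥ 1`. -/
lemma my_pade_lower {x : ℝ} (hx : 1 ≤ x) : 2 * (x - 1) / (x + 1) ≤ Real.log x := by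
  set f : ℝ → ℝ := fun y => Real.log y - 2 * (y - 1) / (y + 1) with hf
  have hd : ∀ y : ℝ, 1 ≤ y → HasDerivAt f (1 / y - 4 / (y + 1) ^ 2) y := by
    intro y hy
    have hy0 : y ≠ 0 := by linarith
    have hy1 : y + 1 ≠ 0 := by linarith
    have h1 : HasDerivAt Real.log (1 / y) y := by
      simpa [one_div] using Real.hasDerivAt_log hy0
    have h2 : HasDerivAt (fun y : ℝ => 2 * (y - 1) / (y + 1)) (4 / (y + 1) ^ 2) y := by
      have hnum : HasDerivAt (fun y : ℝ => 2 * (y - 1)) 2 y := by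
        simpa using ((hasDerivAt_id y).sub_const 1).const_mul 2
      have hden : HasDerivAt (fun y : ℝ => y + 1) 1 y := (hasDerivAt_id y).add_const 1
      have := hnum.div hden hy1
      refine this.congr_deriv ?_
      field_simp
      ring
    exact h1.sub h2
  have hmono : MonotoneOn f (Set.Ici 1) := by
    apply monotoneOn_of_deriv_nonneg (convex_Ici 1)
    · intro y hy
      exact (hd y hy).continuousAt.continuousWithinAt
    · intro y hy
      rw [interior_Ici] at hy
      exact (hd y (le_of_lt hy)).differentiableAt.differentiableWithinAt
    · intro y hy
      rw [interior_Ici] at hy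
      rw [(hd y (le_of_lt hy)).deriv]
      have hy1 : 1 < y := hy
      have hy0 : (0:ℝ) < y := by linarith
      have e : 1 / y - 4 / (y + 1) ^ 2 = (y - 1) ^ 2 / (y * (y + 1) ^ 2) := by
        field_simp
        ring
      rw [e]
      positivity
  have h1 : f 1 ≤ f x := hmono (by simp) (by simpa using hx) hx
  have : f 1 = 0 := by simp [hf]
  rw [this] at h1
  simp only [hf] at h1
  linarith

/-- Padé upper bound for log: `log x ≤ (x - 1/x)/2` for `x ≥ 1`. -/
lemma my_pade_upper {x : ℝ} (hx : 1 ≤ x) : Real.log x ≤ (x - 1 / x) / 2 := by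
  set f : ℝ → ℝ := fun y => (y - 1 / y) / 2 - Real.log y with hf
  have hd : ∀ y : ℝ, 1 ≤ y → HasDerivAt f ((1 + 1 / y ^ 2) / 2 - 1 / y) y := by
    intro y hy
    have hy0 : y ≠ 0 := by linarith
    have h1 : HasDerivAt Real.log (1 / y) y := by
      simpa [one_div] using Real.hasDerivAt_log hy0
    have h2 : HasDerivAt (fun y : ℝ => (y - 1 / y) / 2) ((1 + 1 / y ^ 2) / 2) y := by
      have hinv : HasDerivAt (fun y : ℝ => 1 / y) (-(1 / y ^ 2)) y := by
        simpa [one_div] using (hasDerivAt_inv hy0)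
      have := ((hasDerivAt_id y).sub hinv).div_const 2
      refine this.congr_deriv ?_
      ring
    exact h2.sub h1
  have hmono : MonotoneOn f (Set.Ici 1) := by
    apply monotoneOn_of_deriv_nonneg (convex_Ici 1)
    · intro y hy
      exact (hd y hy).continuousAt.continuousWithinAt
    · intro y hy
      rw [interior_Ici] at hy
      exact (hd y (le_of_lt hy)).differentiableAt.differentiableWithinAt
    · intro y hy
      rw [interior_Ici] at hy
      rw [(hd y (le_of_lt hy)).deriv]
      have hy1 : 1 < y := hy
      have hy0 : (0:ℝ) < y := by linarith
      have e : (1 + 1 / y ^ 2) / 2 - 1 / y = (y - 1) ^ 2 / (2 * y ^ 2) := by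
        field_simp
        ring
      rw [e]
      positivity
  have h1 : f 1 ≤ f x := hmono (by simp) (by simpa using hx) hx
  have : f 1 = 0 := by simp [hf]
  rw [this] at h1
  simp only [hf] at h1
  linarith

/-- Key inequality in the positive case. -/
lemma my_key_pos (a b : ℝ) (ha : 0 < a) (hab : a < b) :
    |(1 / a + 1 / b) / 2 - (Real.log b - Real.log a) / (b - a)|
      ≤ (b - a) / 6 * ((1 / a ^ 2 + 1 / b ^ 2) / 2) := by
  have hb : 0 < b := lt_trans ha hab
  have hba : 0 < b - a := by linarith
  have hx1 : 1 ≤ b / a := by rw [le_div_iff₀ ha]; linarith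
  have hlog : Real.log b - Real.log a = Real.log (b / a) := (Real.log_div hb.ne' ha.ne').symm
  rw [hlog]
  -- upper bound on log gives nonnegativity of the expression
  have hub : Real.log (b / a) ≤ (b - a) * ((1 / a + 1 / b) / 2) := by
    have h := my_pade_upper hx1
    have he : ((b / a) - 1 / (b / a)) / 2 = (b - a) * ((1 / a + 1 / b) / 2) := by
      field_simp
      ring
    linarith [he ▸ h]
  have hlb : (b - a) * (2 / (a + b)) ≤ Real.log (b / a) := by
    have h := my_pade_lower hx1
    have he : 2 * ((b / a) - 1) / ((b / a) + 1) = (b - a) * (2 / (a + b)) := by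
      field_simp
      ring
    linarith [he ▸ h]
  have hnn : 0 ≤ (1 / a + 1 / b) / 2 - Real.log (b / a) / (b - a) := by
    rw [sub_nonneg, div_le_iff₀ hba]
    linarith [hub]
  rw [abs_of_nonneg hnn]
  have h2 : 2 / (a + b) ≤ Real.log (b / a) / (b - a) := by
    rw [le_div_iff₀ hba]
    linarith [hlb]
  have halg : (1 / a + 1 / b) / 2 - 2 / (a + b) ≤ (b - a) / 6 * ((1 / a ^ 2 + 1 / b ^ 2) / 2) := by
    have e1 : (1 / a + 1 / b) / 2 - 2 / (a + b) = (b - a) ^ 2 / (2 * (a * b * (a + b))) := by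
      field_simp
      ring
    have e2 : (b - a) / 6 * ((1 / a ^ 2 + 1 / b ^ 2) / 2) =
        ((b - a) * (a ^ 2 + b ^ 2)) / (12 * (a ^ 2 * b ^ 2)) := by
      field_simp
      ring
    rw [e1, e2, div_le_div_iff₀ (by positivity) (by positivity)]
    -- reduces to 6ab(b-a) ≤ (a+b)(a²+b²) after scaling
    nlinarith [mul_nonneg (sq_nonneg (3 * (b - a) - 4 * a)) (by linarith : (0:ℝ) ≤ 3 * (b - a) + 2 * a),
      pow_pos ha 3, mul_pos (mul_pos ha hb) hba, mul_pos ha hb, mul_pos (mul_pos (mul_pos ha hb) (mul_pos ha hb)) hba]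
  linarith

/-- Key inequality for both sign cases, stated with absolute values. -/
lemma my_key (a b : ℝ) (hab : a < b) (h0 : (0:ℝ) ∉ Set.Icc a b) :
    |(1 / a + 1 / b) / 2 - (Real.log |b| - Real.log |a|) / (b - a)|
      ≤ (b - a) / 6 * ((1 / a ^ 2 + 1 / b ^ 2) / 2) := by
  rcases lt_or_ge 0 a with ha | ha
  · have hb : 0 < b := lt_trans ha hab
    rw [abs_of_pos ha, abs_of_pos hb]
    exact my_key_pos a b ha hab
  · have hb : b < 0 := by
      by_contra hbn
      exact h0 ⟨ha, by linarith⟩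
    have ha' : a < 0 := lt_trans hab hb
    have h := my_key_pos (-b) (-a) (by linarith) (by linarith)
    rw [abs_of_neg ha', abs_of_neg hb]
    calc |(1 / a + 1 / b) / 2 - (Real.log (-b) - Real.log (-a)) / (b - a)|
        = |(1 / (-b) + 1 / (-a)) / 2 - (Real.log (-a) - Real.log (-b)) / ((-a) - (-b))| := by
          rw [← abs_neg]
          congr 1
          have hbne : b ≠ 0 := ne_of_lt hb
          have hane : a ≠ 0 := ne_of_lt ha'
          field_simp [hane, hbne]
          ring
      _ ≤ ((-a) - (-b)) / 6 * ((1 / (-b) ^ 2 + 1 / (-a) ^ 2) / 2) := h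
      _ = (b - a) / 6 * ((1 / a ^ 2 + 1 / b ^ 2) / 2) := by ring_nf

theorem prop_3_2_a (a b : ℝ) (hab : a < b) (h0 : (0:ℝ) ∉ Set.Icc a b)
    (p q : ℝ) (hp : 1 < p) (hq : q = p / (p - 1)) :
    |(1 / a + 1 / b) / 2 - (Real.log |b| - Real.log |a|) / (b - a)|
      ≤ (b - a) * (1 / (p + 1)) ^ (1 / p) * (1 / 2 : ℝ) ^ (1 / q) *
        ((|a| ^ (-2 : ℤ) + |b| ^ (-2 : ℤ)) / 2) := by
  have ha0 : a ≠ 0 := by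
    intro h; exact h0 ⟨h.le, by linarith⟩
  have hb0 : b ≠ 0 := by
    intro h; exact h0 ⟨by linarith, h.ge⟩
  have hba : (0:ℝ) < b - a := by linarith
  have hp0 : (0:ℝ) < p := by linarith
  -- rewrite zpow
  have hz : ∀ x : ℝ, |x| ^ (-2 : ℤ) = 1 / x ^ 2 := by
    intro x
    rw [zpow_neg, one_div]
    congr 1
    rw [show ((2:ℤ)) = ((2:ℕ):ℤ) by norm_num, zpow_natCast, sq_abs]
  rw [hz a, hz b]
  -- bounds on the constants
  have hq1 : 1 ≤ q := by
    rw [hq, le_div_iff₀ (by linarith)]; linarith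
  have hq0 : (0:ℝ) < q := by linarith
  have hC2 : (1/2:ℝ) ≤ (1/2:ℝ) ^ (1/q) := by
    calc (1/2:ℝ) = (1/2:ℝ) ^ (1:ℝ) := (Real.rpow_one _).symm
      _ ≤ _ := Real.rpow_le_rpow_of_exponent_ge (by norm_num) (by norm_num)
          (by rw [div_le_one hq0]; exact hq1)
  have hlog3 : (1:ℝ) ≤ Real.log 3 := by
    rw [show (1:ℝ) = Real.log (Real.exp 1) by simp]
    exact Real.log_le_log (Real.exp_pos 1)
      (le_of_lt (lt_trans Real.exp_one_lt_d9 (by norm_num)))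
  have h3p : p + 1 ≤ (3:ℝ) ^ p := by
    have h1 := Real.add_one_le_exp (p * Real.log 3)
    have he : (3:ℝ) ^ p = Real.exp (p * Real.log 3) := by
      rw [Real.rpow_def_of_pos (by norm_num : (0:ℝ) < 3)]
      ring_nf
    rw [he]
    nlinarith [mul_le_mul_of_nonneg_left hlog3 (le_of_lt hp0)]
  have hC1 : (1/3:ℝ) ≤ (1/(p+1)) ^ (1/p) := by
    have hX : (p+1) ^ (1/p : ℝ) ≤ 3 := by
      have h2 := Real.rpow_le_rpow (by positivity) h3p (by positivity : (0:ℝ) ≤ 1/p)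
      calc (p+1) ^ (1/p : ℝ) ≤ ((3:ℝ) ^ p) ^ (1/p : ℝ) := h2
        _ = (3:ℝ) ^ (p * (1/p)) := by rw [← Real.rpow_mul (by norm_num : (0:ℝ) ≤ 3)]
        _ = 3 := by rw [mul_one_div_cancel (ne_of_gt hp0), Real.rpow_one]
    have hXpos : (0:ℝ) < (p+1) ^ (1/p : ℝ) := Real.rpow_pos_of_pos (by linarith) _
    rw [one_div (p+1), Real.inv_rpow (by positivity)]
    rw [show (1/3:ℝ) = 3⁻¹ by norm_num]
    exact inv_anti₀ hXpos hX
  have hC2pos : (0:ℝ) < (1/2:ℝ) ^ (1/q : ℝ) := Real.rpow_pos_of_pos (by norm_num) _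
  have hS : (0:ℝ) ≤ (1 / a ^ 2 + 1 / b ^ 2) / 2 := by positivity
  have hkey := my_key a b hab h0
  calc |(1 / a + 1 / b) / 2 - (Real.log |b| - Real.log |a|) / (b - a)|
      ≤ (b - a) / 6 * ((1 / a ^ 2 + 1 / b ^ 2) / 2) := hkey
    _ ≤ (b - a) * (1 / (p + 1)) ^ (1 / p) * (1 / 2 : ℝ) ^ (1 / q) *
        ((1 / a ^ 2 + 1 / b ^ 2) / 2) := by
        have hc : (1/6:ℝ) ≤ (1 / (p + 1)) ^ (1 / p) * (1 / 2 : ℝ) ^ (1 / q) := by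
          nlinarith [hC1, hC2, hC2pos]
        nlinarith [mul_nonneg (mul_nonneg (le_of_lt hba) hS)
          (by linarith : (0:ℝ) ≤ (1 / (p + 1)) ^ (1 / p) * (1 / 2 : ℝ) ^ (1 / q) - 1/6)]
end

section
/- Let a < b be reals with 0 ∉ [a,b] and q ≥ 1. Then |(1/a + 1/b)/2 - (ln|b| - ln|a|)/(b-a)| ≤ (b-a)·(3^{1-1/q}/4)·(|a|^{-2} + |b|^{-2})/2. -/
lemma logA {t : ℝ} (ht : 1 ≤ t) : Real.log t ≤ (t - t⁻¹) / 2 := by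
  have key : MonotoneOn (fun x : ℝ => (x - x⁻¹) / 2 - Real.log x) (Set.Ici 1) := by
    apply monotoneOn_of_deriv_nonneg (convex_Ici 1)
    · apply ContinuousOn.sub
      · exact ((continuousOn_id.sub (continuousOn_inv₀.mono (by intro x hx; simp at hx ⊢; linarith))).div_const 2)
      · exact Real.continuousOn_log.mono (by intro x hx; simp at hx ⊢; linarith)
    · intro x hx
      rw [interior_Ici] at hx
      have hx0 : (0:ℝ) < x := lt_trans one_pos hx
      have h : HasDerivAt (fun x : ℝ => (x - x⁻¹) / 2 - Real.log x)
          ((1 - -(x^2)⁻¹) / 2 - x⁻¹) x :=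
        (((hasDerivAt_id x).sub (hasDerivAt_inv hx0.ne')).div_const 2).sub
          (Real.hasDerivAt_log hx0.ne')
      exact h.differentiableAt.differentiableWithinAt
    · intro x hx
      rw [interior_Ici] at hx
      have hx0 : (0:ℝ) < x := lt_trans one_pos hx
      have h : HasDerivAt (fun x : ℝ => (x - x⁻¹) / 2 - Real.log x)
          ((1 - -(x^2)⁻¹) / 2 - x⁻¹) x :=
        (((hasDerivAt_id x).sub (hasDerivAt_inv hx0.ne')).div_const 2).sub
          (Real.hasDerivAt_log hx0.ne')
      rw [h.deriv]
      have e1 : x⁻¹ = 1/x := (one_div x).symm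
      have e2 : (x^2)⁻¹ = 1/x^2 := by simp
      rw [e1, e2]
      have hx1 : (1:ℝ) ≤ x := le_of_lt hx
      have h1 : (1:ℝ)/x ≤ 1 := by rw [div_le_one hx0]; exact hx1
      have e3 : ((1:ℝ)/x)^2 = 1/x^2 := by rw [div_pow, one_pow]
      nlinarith [sq_nonneg (1/x - 1)]
  have h1 := key (Set.self_mem_Ici) (Set.mem_Ici.mpr ht) ht
  simp only [inv_one, Real.log_one, sub_self, zero_div, sub_zero] at h1
  linarith

lemma logB {t : ℝ} (ht : 1 ≤ t) :
    (t - t⁻¹) / 2 - (t - 1) ^ 2 * (1 + (t ^ 2)⁻¹) / 8 ≤ Real.log t := by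
  have key : MonotoneOn (fun x : ℝ =>
      Real.log x - (x - x⁻¹) / 2 + (x - 1) ^ 2 * (1 + (x ^ 2)⁻¹) / 8) (Set.Ici 1) := by
    have hd : ∀ x : ℝ, 0 < x → HasDerivAt (fun x : ℝ =>
        Real.log x - (x - x⁻¹) / 2 + (x - 1) ^ 2 * (1 + (x ^ 2)⁻¹) / 8)
        (x⁻¹ - (1 - -(x^2)⁻¹) / 2 +
          ((↑2 * (x - 1) ^ 1 * 1) * (1 + (x ^ 2)⁻¹) + (x - 1) ^ 2 * (-(2 * x ^ 1) / (x ^ 2) ^ 2)) / 8) x := by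
      intro x hx0
      have hp : HasDerivAt (fun y : ℝ => (y ^ 2)⁻¹) (-(2 * x ^ 1) / (x ^ 2) ^ 2) x :=
        (hasDerivAt_pow 2 x).inv (pow_ne_zero 2 hx0.ne')
      have hr : HasDerivAt (fun y : ℝ => 1 + (y ^ 2)⁻¹) (-(2 * x ^ 1) / (x ^ 2) ^ 2) x :=
        hp.const_add 1
      have hq : HasDerivAt (fun y : ℝ => (y - 1) ^ 2) (↑2 * (x - 1) ^ 1 * 1) x :=
        ((hasDerivAt_id x).sub_const 1).pow 2
      exact ((Real.hasDerivAt_log hx0.ne').sub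
        (((hasDerivAt_id x).sub (hasDerivAt_inv hx0.ne')).div_const 2)).add
        ((hq.mul hr).div_const 8)
    apply monotoneOn_of_deriv_nonneg (convex_Ici 1)
    · apply ContinuousOn.add
      · apply ContinuousOn.sub
        · exact Real.continuousOn_log.mono (by intro x hx; simp at hx ⊢; linarith)
        · exact ((continuousOn_id.sub (continuousOn_inv₀.mono (by intro x hx; simp at hx ⊢; linarith))).div_const 2)
      · apply ContinuousOn.div_const
        apply ContinuousOn.mul
        · fun_prop
        · apply ContinuousOn.add continuousOn_const
          exact ContinuousOn.inv₀ (by fun_prop)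
            (fun x hx => pow_ne_zero 2 (by simp at hx; positivity))
    · intro x hx
      rw [interior_Ici] at hx
      exact (hd x (lt_trans one_pos hx)).differentiableAt.differentiableWithinAt
    · intro x hx
      rw [interior_Ici] at hx
      have hx0 : (0:ℝ) < x := lt_trans one_pos hx
      rw [(hd x hx0).deriv]
      have key2 : x⁻¹ - (1 - -(x^2)⁻¹) / 2 +
          ((↑2 * (x - 1) ^ 1 * 1) * (1 + (x ^ 2)⁻¹) + (x - 1) ^ 2 * (-(2 * x ^ 1) / (x ^ 2) ^ 2)) / 8
          = ((x - 1) * (x^3 - 2*x^2 + 2*x + 1)) / (4 * x^3) := by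
        field_simp
        ring
      rw [key2]
      have hx1 := Set.mem_Ioi.mp hx
      have h1 : (0:ℝ) ≤ x - 1 := by linarith
      have h2 : (0:ℝ) < x^3 - 2*x^2 + 2*x + 1 := by nlinarith [sq_nonneg (x-1)]
      positivity
  have h1 := key (Set.self_mem_Ici) (Set.mem_Ici.mpr ht) ht
  norm_num at h1
  linarith


lemma core (a b : ℝ) (ha : 0 < a) (hab : a < b) :
    |(1 / a + 1 / b) / 2 - (Real.log b - Real.log a) / (b - a)|
      ≤ (b - a) * ((1 / a ^ 2 + 1 / b ^ 2) / 8) := by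
  have hb : 0 < b := lt_trans ha hab
  have hba : 0 < b - a := by linarith
  have ht : 1 ≤ b / a := (one_le_div ha).mpr hab.le
  have hL : Real.log b - Real.log a = Real.log (b / a) :=
    (Real.log_div hb.ne' ha.ne').symm
  have h1 : Real.log b - Real.log a ≤ (b - a) * ((1 / a + 1 / b) / 2) := by
    rw [hL]
    refine le_trans (logA ht) (le_of_eq ?_)
    field_simp
    ring
  have h2 : (b - a) * ((1 / a + 1 / b) / 2) - (b - a) ^ 2 * ((1 / a ^ 2 + 1 / b ^ 2) / 8)
      ≤ Real.log b - Real.log a := by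
    rw [hL]
    refine le_trans (le_of_eq ?_) (logB ht)
    field_simp
    ring
  have hpos : (0:ℝ) ≤ (b - a) * ((1 / a ^ 2 + 1 / b ^ 2) / 8) := by positivity
  rw [abs_le]
  constructor
  · have hdiv : (Real.log b - Real.log a) / (b - a) ≤ (1 / a + 1 / b) / 2 :=
      (div_le_iff₀ hba).mpr (by nlinarith)
    linarith
  · have hdiv2 : (1 / a + 1 / b) / 2 - (b - a) * ((1 / a ^ 2 + 1 / b ^ 2) / 8)
        ≤ (Real.log b - Real.log a) / (b - a) :=
      (le_div_iff₀ hba).mpr (by nlinarith)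
    linarith

theorem prop_3_2_b (a b : ℝ) (hab : a < b) (h0 : (0:ℝ) ∉ Set.Icc a b)
    (q : ℝ) (hq : 1 ≤ q) :
    |(1 / a + 1 / b) / 2 - (Real.log |b| - Real.log |a|) / (b - a)|
      ≤ (b - a) * ((3 : ℝ) ^ (1 - 1 / q) / 4) *
        ((|a| ^ (-2 : ℤ) + |b| ^ (-2 : ℤ)) / 2) := by
  have ha0 : a ≠ 0 := fun h => h0 (by simp [h]; linarith)
  have hb0 : b ≠ 0 := fun h => h0 (by simp [h]; linarith)
  have ea : |a| ^ (-2 : ℤ) = 1 / a ^ 2 := by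
    rw [zpow_neg]
    norm_num
  have eb : |b| ^ (-2 : ℤ) = 1 / b ^ 2 := by
    rw [zpow_neg]
    norm_num
  have hc : (1:ℝ) ≤ (3:ℝ) ^ (1 - 1/q) := by
    rw [show (1:ℝ) = (3:ℝ) ^ (0:ℝ) from (Real.rpow_zero 3).symm]
    apply Real.rpow_le_rpow_of_exponent_le (by norm_num)
    have : 1 / q ≤ 1 := by
      rw [div_le_one (by linarith)]; exact hq
    linarith
  have hmain : |(1 / a + 1 / b) / 2 - (Real.log |b| - Real.log |a|) / (b - a)|
      ≤ (b - a) * ((1 / a ^ 2 + 1 / b ^ 2) / 8) := by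
    rcases lt_or_gt_of_ne ha0 with ha | ha
    · -- a < 0; since 0 ∉ Icc, b < 0
      have hb : b < 0 := by
        by_contra h
        exact h0 ⟨ha.le, le_of_not_gt h⟩
      have hcore := core (-b) (-a) (by linarith) (by linarith)
      have e1 : Real.log |a| = Real.log (-a) := by rw [abs_of_neg ha]
      have e2 : Real.log |b| = Real.log (-b) := by rw [abs_of_neg hb]
      rw [e1, e2]
      have e3 : (1 / a + 1 / b) / 2 - (Real.log (-b) - Real.log (-a)) / (b - a)
          = -((1 / (-b) + 1 / (-a)) / 2 - (Real.log (-a) - Real.log (-b)) / (-a - -b)) := by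
        rw [div_neg, div_neg, show -a - -b = b - a by ring]
        ring
      have e4 : (-a - -b) * ((1 / (-b) ^ 2 + 1 / (-a) ^ 2) / 8)
          = (b - a) * ((1 / a ^ 2 + 1 / b ^ 2) / 8) := by ring
      rw [e3, abs_neg]
      rw [e4] at hcore
      linarith [hcore]
    · rw [abs_of_pos ha, abs_of_pos (lt_trans ha hab)]
      exact core a b ha hab
  rw [ea, eb]
  have hba : (0:ℝ) ≤ b - a := by linarith
  have hnn : (0:ℝ) ≤ (1 / a ^ 2 + 1 / b ^ 2) / 2 := by positivity
  nlinarith [mul_nonneg hba hnn]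
end

section
/- Let f be differentiable with f' integrable on [a,b], p > 1, q = p/(p-1), and |f'|^q convex on [a,b]. For every partition a = x₀ < x₁ < ... < xₙ = b, the trapezoidal error satisfies |∫_a^b f(x) dx - ∑_{i=0}^{n-1} (f(x_i)+f(x_{i+1}))/2 · (x_{i+1}-x_i)| ≤ (1/(p+1))^{1/p}·(1/2)^{1/q}·∑_{i=0}^{n-1} ((x_{i+1}-x_i)²/2)·(|f'(x_i)| + |f'(x_{i+1})|). -/
open MeasureTheory intervalIntegral

private lemma lp_calc (p : ℝ) (hp : 1 < p) (α β : ℝ) (hαβ : α < β) :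
    (∫ u in α..β, |u - (α+β)/2| ^ p)
      = (β - α) ^ (p+1) / (2 ^ p * (p+1)) := by
  set m := (α+β)/2 with hm
  have hp0 : (0:ℝ) < p := by linarith
  have hcont : Continuous fun u : ℝ => |u - m| ^ p := by
    apply Continuous.rpow_const (by continuity)
    intro x; right; exact hp0.le
  have hαm : α < m := by simp only [hm]; linarith
  have hmβ : m < β := by simp only [hm]; linarith
  have h1 : (∫ u in α..m, |u - m| ^ p) = (m - α) ^ (p+1) / (p+1) := by
    have : (∫ u in α..m, |u - m| ^ p) = ∫ u in α..m, (m - u) ^ p := by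
      apply intervalIntegral.integral_congr
      intro u hu
      rw [Set.uIcc_of_le hαm.le] at hu
      show |u - m| ^ p = (m - u) ^ p
      rw [abs_of_nonpos (by linarith [hu.2]), neg_sub]
    rw [this]
    rw [intervalIntegral.integral_comp_sub_left (fun u => u ^ p) m]
    rw [integral_rpow (Or.inl (by linarith : (-1:ℝ) < p))]
    rw [sub_self, Real.zero_rpow (by positivity : (0:ℝ) < p+1).ne', sub_zero]
  have h2 : (∫ u in m..β, |u - m| ^ p) = (β - m) ^ (p+1) / (p+1) := by
    have : (∫ u in m..β, |u - m| ^ p) = ∫ u in m..β, (u - m) ^ p := by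
      apply intervalIntegral.integral_congr
      intro u hu
      rw [Set.uIcc_of_le hmβ.le] at hu
      show |u - m| ^ p = (u - m) ^ p
      rw [abs_of_nonneg (by linarith [hu.1])]
    rw [this]
    rw [intervalIntegral.integral_comp_sub_right (fun u => u ^ p) m]
    rw [integral_rpow (Or.inl (by linarith : (-1:ℝ) < p))]
    rw [sub_self, Real.zero_rpow (by positivity : (0:ℝ) < p+1).ne', sub_zero]
  have hsplit : (∫ u in α..β, |u - m| ^ p)
      = (∫ u in α..m, |u - m| ^ p) + ∫ u in m..β, |u - m| ^ p := by
    rw [intervalIntegral.integral_add_adjacent_intervals] <;>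
      exact hcont.intervalIntegrable _ _
  rw [hsplit, h1, h2]
  have hmα : m - α = (β - α)/2 := by simp only [hm]; ring
  have hβm : β - m = (β - α)/2 := by simp only [hm]; ring
  rw [hmα, hβm]
  rw [Real.div_rpow (by linarith) (by norm_num)]
  have h2p : (2:ℝ) ^ (p+1) = 2 ^ p * 2 := by
    rw [Real.rpow_add (by norm_num), Real.rpow_one]
  rw [h2p]
  field_simp
  ring

private lemma sum_rpow_le (A B q : ℝ) (hA : 0 ≤ A) (hB : 0 ≤ B) (hq : 1 ≤ q) :
    (A ^ q + B ^ q) ^ (1/q) ≤ A + B := by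
  lift A to NNReal using hA
  lift B to NNReal using hB
  have := NNReal.rpow_add_rpow_le_add A B hq
  exact_mod_cast this

private lemma final_algebra (p q h A B : ℝ) (hpq : p.HolderConjugate q) (hh : 0 < h)
    (hA : 0 ≤ A) (hB : 0 ≤ B) :
    (h ^ (p+1) / (2 ^ p * (p+1))) ^ (1/p) * (h * (A ^ q + B ^ q) / 2) ^ (1/q)
      ≤ (1 / (p + 1)) ^ (1 / p) * (1 / 2 : ℝ) ^ (1 / q) * (h ^ 2 / 2 * (A + B)) := by
  have hp1 := hpq.lt
  have hq1 := hpq.symm.lt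
  have hp0 : (0:ℝ) < p := by linarith
  have hq0 : (0:ℝ) < q := by linarith
  have hS : (0:ℝ) ≤ A ^ q + B ^ q := by positivity
  have e1 : (h ^ (p+1) / (2 ^ p * (p+1))) ^ (1/p)
      = h ^ ((p+1) * (1/p)) * (1/2) * (1/(p+1)) ^ (1/p) := by
    rw [Real.div_rpow (Real.rpow_nonneg hh.le _) (by positivity),
      Real.mul_rpow (by positivity) (by positivity),
      ← Real.rpow_mul hh.le, ← Real.rpow_mul (by norm_num : (0:ℝ) ≤ 2),
      show p * (1/p) = 1 by field_simp, Real.rpow_one,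
      Real.div_rpow zero_le_one (by positivity), Real.one_rpow]
    field_simp
  have e2 : (h * (A ^ q + B ^ q) / 2) ^ (1/q)
      = h ^ (1/q) * (A ^ q + B ^ q) ^ (1/q) * (1/2 : ℝ) ^ (1/q) := by
    rw [div_eq_mul_one_div, Real.mul_rpow (by positivity) (by norm_num),
      Real.mul_rpow hh.le hS]
  rw [e1, e2]
  have hexp : (p+1) * (1/p) + 1/q = 2 := by
    have h1 := hpq.inv_add_inv_eq_one
    field_simp at h1 ⊢
    nlinarith [h1]
  have hh2 : h ^ ((p+1) * (1/p)) * h ^ (1/q) = h ^ 2 := by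
    rw [← Real.rpow_add hh, hexp]
    rw [show (2:ℝ) = ((2:ℕ):ℝ) by norm_num, Real.rpow_natCast]
  calc h ^ ((p+1) * (1/p)) * (1/2) * (1/(p+1)) ^ (1/p)
        * (h ^ (1/q) * (A ^ q + B ^ q) ^ (1/q) * (1/2 : ℝ) ^ (1/q))
      = (1/(p+1)) ^ (1/p) * (1/2 : ℝ) ^ (1/q)
        * ((h ^ ((p+1) * (1/p)) * h ^ (1/q)) / 2 * (A ^ q + B ^ q) ^ (1/q)) := by ring
    _ = (1/(p+1)) ^ (1/p) * (1/2 : ℝ) ^ (1/q)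
        * (h ^ 2 / 2 * (A ^ q + B ^ q) ^ (1/q)) := by rw [hh2]
    _ ≤ (1/(p+1)) ^ (1/p) * (1/2 : ℝ) ^ (1/q) * (h ^ 2 / 2 * (A + B)) := by
        apply mul_le_mul_of_nonneg_left _ (by positivity)
        apply mul_le_mul_of_nonneg_left _ (by positivity)
        exact sum_rpow_le A B q hA hB hq1.le

private lemma trap_key (f f' : ℝ → ℝ) (a b c d : ℝ)
    (hca : c < a) (hbd : b < d)
    (hf : ∀ y ∈ Set.Ioo c d, HasDerivAt f (f' y) y)
    (hint : IntervalIntegrable f' volume a b)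
    (p q : ℝ) (hp : 1 < p) (hq : q = p / (p - 1))
    (hconv : ConvexOn ℝ (Set.Icc a b) (fun y => |f' y| ^ q))
    (α β : ℝ) (haα : a ≤ α) (hβb : β ≤ b) (hαβ : α < β) :
    |(∫ u in α..β, f u) - (f α + f β) / 2 * (β - α)|
      ≤ (1 / (p + 1)) ^ (1 / p) * (1 / 2 : ℝ) ^ (1 / q) *
        ((β - α) ^ 2 / 2 * (|f' α| + |f' β|)) := by
  have hpq : p.HolderConjugate q := (Real.holderConjugate_iff_eq_conjExponent hp).2 hq
  have hq1 : 1 < q := hpq.symm.lt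
  set m := (α + β) / 2 with hm
  set h := β - α with hh
  have hh0 : 0 < h := by simp only [hh]; linarith
  set A := |f' α| with hA
  set B := |f' β| with hB
  have hA0 : 0 ≤ A := abs_nonneg _
  have hB0 : 0 ≤ B := abs_nonneg _
  have hsub : Set.Icc α β ⊆ Set.Icc a b := Set.Icc_subset_Icc haα hβb
  -- membership facts
  have hαmem : α ∈ Set.Icc a b := ⟨haα, by linarith⟩
  have hβmem : β ∈ Set.Icc a b := ⟨by linarith, hβb⟩
  -- pointwise convexity bound
  have hconvpt : ∀ u ∈ Set.Icc α β,
      |f' u| ^ q ≤ ((β - u) * A ^ q + (u - α) * B ^ q) / h := by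
    intro u hu
    have hl0 : 0 ≤ (β - u) / h := by
      apply div_nonneg _ hh0.le; linarith [hu.2]
    have hr0 : 0 ≤ (u - α) / h := by
      apply div_nonneg _ hh0.le; linarith [hu.1]
    have hsum : (β - u) / h + (u - α) / h = 1 := by
      field_simp
      rw [hh]; ring
    have hcombo : ((β - u) / h) • α + ((u - α) / h) • β = u := by
      simp only [smul_eq_mul]
      field_simp
      ring
    have := hconv.2 hαmem hβmem hl0 hr0 hsum
    rw [hcombo] at this
    simp only [smul_eq_mul] at this
    calc |f' u| ^ q ≤ (β - u) / h * A ^ q + (u - α) / h * B ^ q := this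
      _ = ((β - u) * A ^ q + (u - α) * B ^ q) / h := by ring
  -- pointwise bound on |f'|
  have hptbd : ∀ u ∈ Set.Icc α β, |f' u| ≤ A + B := by
    intro u hu
    have h1 : |f' u| ^ q ≤ (A + B) ^ q := by
      refine le_trans (hconvpt u hu) ?_
      have hq0 : (0:ℝ) ≤ q := by linarith
      have hAB : A ^ q + B ^ q ≤ (A + B) ^ q := by
        have := sum_rpow_le A B q hA0 hB0 hq1.le
        calc A ^ q + B ^ q
            = ((A ^ q + B ^ q) ^ (1/q)) ^ q := by
              rw [← Real.rpow_mul (by positivity), one_div,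
                inv_mul_cancel₀ (by linarith : q ≠ 0), Real.rpow_one]
          _ ≤ (A + B) ^ q := Real.rpow_le_rpow (by positivity) this hq0
      calc ((β - u) * A ^ q + (u - α) * B ^ q) / h
          ≤ ((β - u) * (A ^ q + B ^ q) + (u - α) * (A ^ q + B ^ q)) / h := by
            have h1 : (0:ℝ) ≤ β - u := by linarith [hu.2]
            have h2 : (0:ℝ) ≤ u - α := by linarith [hu.1]
            have hSA : A ^ q ≤ A ^ q + B ^ q := le_add_of_nonneg_right (by positivity)
            have hSB : B ^ q ≤ A ^ q + B ^ q := le_add_of_nonneg_left (by positivity)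
            gcongr
        _ = A ^ q + B ^ q := by field_simp; ring
        _ ≤ (A + B) ^ q := hAB
    calc |f' u| = (|f' u| ^ q) ^ (1/q) := by
          rw [← Real.rpow_mul (abs_nonneg _), mul_one_div,
            div_self (by linarith : q ≠ 0), Real.rpow_one]
      _ ≤ ((A + B) ^ q) ^ (1/q) := Real.rpow_le_rpow (by positivity) h1 (by positivity)
      _ = A + B := by
          rw [← Real.rpow_mul (by positivity), mul_one_div,
            div_self (by linarith : q ≠ 0), Real.rpow_one]
  -- integration by parts
  have huIcc : Set.uIcc α β ⊆ Set.Ioo c d := by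
    rw [Set.uIcc_of_le hαβ.le]
    intro y hy
    exact ⟨by linarith [hy.1], by linarith [hy.2]⟩
  have hint' : IntervalIntegrable f' volume α β :=
    hint.mono_set (by
      rw [Set.uIcc_of_le hαβ.le, Set.uIcc_of_le (by linarith : a ≤ b)]
      exact Set.Icc_subset_Icc haα hβb)
  have parts : (∫ u in α..β, f u) - (f α + f β)/2 * (β - α)
      = - ∫ u in α..β, (u - m) * f' u := by
    have H := intervalIntegral.integral_mul_deriv_eq_deriv_mul
      (u := fun u => u - m) (u' := fun _ => (1:ℝ)) (v := f) (v' := f')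
      (fun y _ => ((hasDerivAt_id y).sub_const _))
      (fun y hy => hf y (huIcc hy))
      intervalIntegrable_const hint'
    rw [H]
    simp only [hm]
    ring_nf
  set μ := volume.restrict (Set.Ioc α β) with hμ
  haveI : IsFiniteMeasure μ := ⟨by rw [hμ, Measure.restrict_apply_univ]; exact measure_Ioc_lt_top⟩
  have hIocIcc : Set.Ioc α β ⊆ Set.Icc α β := Set.Ioc_subset_Icc_self
  have hfm : AEStronglyMeasurable f' μ := by
    apply (measurable_deriv f).aestronglyMeasurable.congr
    refine (ae_restrict_iff' measurableSet_Ioc).2 (ae_of_all _ fun y hy => ?_)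
    exact (hf y ⟨by linarith [hy.1], by linarith [hy.2]⟩).deriv
  have hum : MemLp (fun u : ℝ => u - m) (ENNReal.ofReal p) μ :=
    MemLp.of_bound ((measurable_id.sub_const m).aestronglyMeasurable) h
      ((ae_restrict_iff' measurableSet_Ioc).2 (ae_of_all _ fun y hy => by
        rw [Real.norm_eq_abs, abs_le]
        constructor
        · simp only [hm, hh]; linarith [hy.1, hy.2]
        · simp only [hm, hh]; linarith [hy.1, hy.2]))
  have hfq : MemLp f' (ENNReal.ofReal q) μ :=
    MemLp.of_bound hfm (A + B)
      ((ae_restrict_iff' measurableSet_Ioc).2 (ae_of_all _ fun y hy => by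
        rw [Real.norm_eq_abs]; exact hptbd y (hIocIcc hy)))
  have hold := MeasureTheory.integral_mul_norm_le_Lp_mul_Lq hpq hum hfq
  simp only [Real.norm_eq_abs] at hold
  have step1 : |(∫ u in α..β, f u) - (f α + f β)/2*(β-α)|
      ≤ ∫ u, |u - m| * |f' u| ∂μ := by
    rw [parts, abs_neg]
    refine (intervalIntegral.abs_integral_le_integral_abs hαβ.le).trans ?_
    rw [intervalIntegral.integral_of_le hαβ.le]
    simp only [abs_mul, hμ, le_refl]
  have hLp : (∫ u, |u - m| ^ p ∂μ) = h ^ (p+1) / (2 ^ p * (p+1)) := by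
    rw [hμ, ← intervalIntegral.integral_of_le hαβ.le]
    simp only [hm, hh]
    exact lp_calc p hp α β hαβ
  have hLqint : IntegrableOn (fun u => |f' u| ^ q) (Set.Ioc α β) volume := by
    have hgm : AEStronglyMeasurable (fun u => |f' u| ^ q) μ := by
      have hco : Continuous fun y : ℝ => |y| ^ q :=
        Continuous.rpow_const (by continuity) (fun x => Or.inr (by positivity))
      exact hco.comp_aestronglyMeasurable hfm
    exact memLp_one_iff_integrable.mp (MemLp.of_bound hgm ((A+B) ^ q)
      ((ae_restrict_iff' measurableSet_Ioc).2 (ae_of_all _ fun y hy => by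
        rw [Real.norm_eq_abs, abs_of_nonneg (by positivity)]
        exact Real.rpow_le_rpow (abs_nonneg _) (hptbd y (hIocIcc hy)) (by positivity))))
  have hLq : (∫ u, |f' u| ^ q ∂μ) ≤ h * (A ^ q + B ^ q) / 2 := by
    have haff : (∫ u in Set.Ioc α β, ((β - u) * A ^ q + (u - α) * B ^ q) / h)
        = h * (A ^ q + B ^ q) / 2 := by
      rw [← intervalIntegral.integral_of_le hαβ.le]
      have hrw : (fun u : ℝ => ((β - u) * A ^ q + (u - α) * B ^ q) / h)
          = fun u : ℝ => (β * A ^ q - α * B ^ q)/h + u * ((B ^ q - A ^ q)/h) := by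
        funext u; ring
      have hcont2 : Continuous fun u : ℝ => u * ((B ^ q - A ^ q)/h) :=
        continuous_id.mul continuous_const
      rw [hrw, intervalIntegral.integral_add intervalIntegrable_const
        (hcont2.intervalIntegrable _ _),
        intervalIntegral.integral_const, intervalIntegral.integral_mul_const, integral_id]
      simp only [smul_eq_mul, hh]
      have hβα : β - α ≠ 0 := by linarith
      field_simp
      ring
    refine le_trans ?_ (le_of_eq haff)
    rw [hμ]
    apply setIntegral_mono_on hLqint
    · have hca : Continuous fun u : ℝ => ((β - u) * A ^ q + (u - α) * B ^ q) / h :=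
        (((continuous_const.sub continuous_id).mul continuous_const).add
          ((continuous_id.sub continuous_const).mul continuous_const)).div_const h
      exact hca.integrableOn_Ioc
    · exact measurableSet_Ioc
    · intro u hu; exact hconvpt u (hIocIcc hu)
  have hT1nn : (0:ℝ) ≤ h ^ (p+1) / (2 ^ p * (p+1)) := by
    apply div_nonneg (Real.rpow_nonneg hh0.le _)
    positivity
  calc |(∫ u in α..β, f u) - (f α + f β)/2*(β-α)|
      ≤ ∫ u, |u - m| * |f' u| ∂μ := step1
    _ ≤ (∫ u, |u - m| ^ p ∂μ) ^ (1/p) * (∫ u, |f' u| ^ q ∂μ) ^ (1/q) := hold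
    _ ≤ (h ^ (p+1) / (2 ^ p * (p+1))) ^ (1/p) * (h * (A ^ q + B ^ q) / 2) ^ (1/q) := by
        rw [hLp]
        apply mul_le_mul_of_nonneg_left _ (Real.rpow_nonneg hT1nn _)
        apply Real.rpow_le_rpow (integral_nonneg (fun u => by positivity)) hLq
        positivity
    _ ≤ (1 / (p + 1)) ^ (1 / p) * (1 / 2 : ℝ) ^ (1 / q) * (h ^ 2 / 2 * (A + B)) :=
        final_algebra p q h A B hpq hh0 hA0 hB0

theorem prop_4_1 (f f' : ℝ → ℝ) (a b c d : ℝ) (hab : a < b)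
    (hca : c < a) (hbd : b < d)
    (hf : ∀ y ∈ Set.Ioo c d, HasDerivAt f (f' y) y)
    (hint : IntervalIntegrable f' volume a b)
    (p q : ℝ) (hp : 1 < p) (hq : q = p / (p - 1))
    (hconv : ConvexOn ℝ (Set.Icc a b) (fun y => |f' y| ^ q))
    (n : ℕ) (x : ℕ → ℝ) (hx0 : x 0 = a) (hxn : x n = b)
    (hmono : ∀ i < n, x i < x (i + 1)) :
    |(∫ u in a..b, f u) - ∑ i ∈ Finset.range n,
        (f (x i) + f (x (i + 1))) / 2 * (x (i + 1) - x i)|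
      ≤ (1 / (p + 1)) ^ (1 / p) * (1 / 2 : ℝ) ^ (1 / q) *
        ∑ i ∈ Finset.range n,
          ((x (i + 1) - x i) ^ 2 / 2) * (|f' (x i)| + |f' (x (i + 1))|) := by
  have hmono' : ∀ i j, i ≤ j → j ≤ n → x i ≤ x j := by
    intro i j hij hjn
    induction j, hij using Nat.le_induction with
    | base => exact le_refl _
    | succ j hj ih => exact (ih (by omega)).trans (hmono j (by omega)).le
  have hbounds : ∀ i ≤ n, a ≤ x i ∧ x i ≤ b := fun i hi =>
    ⟨hx0 ▸ hmono' 0 i (Nat.zero_le _) hi, hxn ▸ hmono' i n hi le_rfl⟩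
  have hcont : ∀ i < n, IntervalIntegrable f volume (x i) (x (i+1)) := by
    intro i hi
    apply ContinuousOn.intervalIntegrable
    intro y hy
    rw [Set.uIcc_of_le (hmono i hi).le] at hy
    have h1 := (hbounds i (le_of_lt hi)).1
    have h2 := (hbounds (i+1) hi).2
    exact ((hf y ⟨by linarith [hy.1], by linarith [hy.2]⟩).continuousAt).continuousWithinAt
  have hsplit : (∫ u in a..b, f u) = ∑ i ∈ Finset.range n, ∫ u in (x i)..(x (i+1)), f u := by
    rw [← hx0, ← hxn]
    exact (intervalIntegral.sum_integral_adjacent_intervals hcont).symm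
  rw [hsplit, ← Finset.sum_sub_distrib]
  calc |∑ i ∈ Finset.range n, ((∫ u in (x i)..(x (i+1)), f u)
          - (f (x i) + f (x (i + 1))) / 2 * (x (i + 1) - x i))|
      ≤ ∑ i ∈ Finset.range n, |(∫ u in (x i)..(x (i+1)), f u)
          - (f (x i) + f (x (i + 1))) / 2 * (x (i + 1) - x i)| :=
        Finset.abs_sum_le_sum_abs _ _
    _ ≤ ∑ i ∈ Finset.range n, (1 / (p + 1)) ^ (1 / p) * (1 / 2 : ℝ) ^ (1 / q) *
          (((x (i + 1) - x i) ^ 2 / 2) * (|f' (x i)| + |f' (x (i + 1))|)) := by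
        apply Finset.sum_le_sum
        intro i hi
        rw [Finset.mem_range] at hi
        exact trap_key f f' a b c d hca hbd hf hint p q hp hq hconv
          (x i) (x (i+1)) (hbounds i hi.le).1 (hbounds (i+1) hi).2 (hmono i hi)
    _ = (1 / (p + 1)) ^ (1 / p) * (1 / 2 : ℝ) ^ (1 / q) *
        ∑ i ∈ Finset.range n,
          ((x (i + 1) - x i) ^ 2 / 2) * (|f' (x i)| + |f' (x (i + 1))|) := by
        rw [Finset.mul_sum]
end

section
/- Let f be differentiable with f' integrable on [a,b], q > 1, and |f'|^q concave on [a,b]. For every partition a = x₀ < x₁ < ... < xₙ = b, the trapezoidal error satisfies |∫_a^b f(x) dx - ∑_{i=0}^{n-1} (f(x_i)+f(x_{i+1}))/2 · (x_{i+1}-x_i)| ≤ ((q-1)/(2q-1))^{(q-1)/q}·∑_{i=0}^{n-1} ((x_{i+1}-x_i)²/4)·(|f'((3x_i+x_{i+1})/4)| + |f'((x_i+3x_{i+1})/4)|). -/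
open MeasureTheory intervalIntegral Set

lemma const_ge_half {q : ℝ} (hq : 1 < q) :
    (1:ℝ)/2 ≤ ((q - 1) / (2 * q - 1)) ^ ((q - 1) / q) := by
  have hq1 : 0 < q - 1 := by linarith
  have h2q : 0 < 2 * q - 1 := by linarith
  have hqpos : 0 < q := by linarith
  set u : ℝ := q / (q - 1) with hu
  have hu1 : 1 ≤ u := by
    rw [hu, le_div_iff₀ hq1]; linarith
  have hber : 1 + u ≤ (2:ℝ) ^ u := by
    have h := one_add_mul_self_le_rpow_one_add (s := 1) (by norm_num) hu1
    norm_num at h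
    convert h using 2 <;> norm_num
  have h1u : (1 + u) = (2*q-1)/(q-1) := by
    rw [hu]; field_simp; ring
  have hfrac : (0:ℝ) < (q-1)/(2*q-1) := by positivity
  have h1 : ((1:ℝ)/2) ^ u ≤ (q - 1)/(2*q - 1) := by
    have h2u : (0:ℝ) < (2:ℝ) ^ u := Real.rpow_pos_of_pos (by norm_num) u
    have : (2*q-1)/(q-1) ≤ (2:ℝ) ^ u := by rw [← h1u]; exact hber
    have hinv : ((2:ℝ) ^ u)⁻¹ ≤ ((2*q-1)/(q-1))⁻¹ :=
      inv_anti₀ (by positivity) this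
    calc ((1:ℝ)/2) ^ u = ((2:ℝ)⁻¹) ^ u := by norm_num
      _ = ((2:ℝ) ^ u)⁻¹ := Real.inv_rpow (by norm_num) u
      _ ≤ ((2*q-1)/(q-1))⁻¹ := hinv
      _ = (q-1)/(2*q-1) := by rw [inv_div]
  have ht : (0:ℝ) ≤ (q-1)/q := by positivity
  have := Real.rpow_le_rpow (by positivity) h1 ht
  calc (1:ℝ)/2 = ((1:ℝ)/2) ^ (u * ((q-1)/q)) := by
        rw [show u * ((q-1)/q) = 1 by rw [hu]; field_simp, Real.rpow_one]
    _ = (((1:ℝ)/2) ^ u) ^ ((q-1)/q) := Real.rpow_mul (by norm_num) _ _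
    _ ≤ ((q - 1) / (2 * q - 1)) ^ ((q - 1) / q) := this

lemma abs_concave_of_rpow {g : ℝ → ℝ} {s : Set ℝ} {q : ℝ} (hq : 1 < q)
    (h : ConcaveOn ℝ s (fun y => |g y| ^ q)) : ConcaveOn ℝ s (fun y => |g y|) := by
  have hq0 : (0:ℝ) < q := by linarith
  have hinv0 : (0:ℝ) ≤ 1/q := by positivity
  have hinv1 : 1/q ≤ 1 := by rw [div_le_one hq0]; linarith
  have hiq : q * (1/q) = 1 := by field_simp
  have hid : ∀ t : ℝ, 0 ≤ t → (t ^ q) ^ (1/q) = t := by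
    intro t ht
    rw [← Real.rpow_mul ht, hiq, Real.rpow_one]
  refine ⟨h.1, ?_⟩
  intro u hu v hv μ ν hμ hν hμν
  have h2 := h.2 hu hv hμ hν hμν
  simp only [smul_eq_mul] at h2 ⊢
  set A := |g u| ^ q with hA
  set B := |g v| ^ q with hB
  have hA0 : 0 ≤ A := Real.rpow_nonneg (abs_nonneg _) q
  have hB0 : 0 ≤ B := Real.rpow_nonneg (abs_nonneg _) q
  have hcomb : 0 ≤ μ * A + ν * B := by positivity
  have step1 : (μ * A + ν * B) ^ (1/q) ≤ |g (μ * u + ν * v)| := by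
    calc (μ * A + ν * B) ^ (1/q) ≤ (|g (μ * u + ν * v)| ^ q) ^ (1/q) :=
          Real.rpow_le_rpow hcomb h2 hinv0
      _ = |g (μ * u + ν * v)| := hid _ (abs_nonneg _)
  have step2 : μ * A ^ (1/q) + ν * B ^ (1/q) ≤ (μ * A + ν * B) ^ (1/q) := by
    have hc := (Real.concaveOn_rpow hinv0 hinv1).2 (mem_Ici.2 hA0) (mem_Ici.2 hB0) hμ hν hμν
    simpa using hc
  rw [hid _ (abs_nonneg _), hid _ (abs_nonneg _)] at step2
  linarith

lemma concave_chord {g : ℝ → ℝ} {s : Set ℝ} (hg : ConcaveOn ℝ s g) {p r y : ℝ}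
    (hp : p ∈ s) (hr : r ∈ s) (hpr : p < r) (hy : y ∈ Icc p r) :
    ((r - y) * g p + (y - p) * g r) / (r - p) ≤ g y := by
  have hrp : (0:ℝ) < r - p := by linarith
  set t := (r - y) / (r - p) with ht
  have ht0 : 0 ≤ t := by apply div_nonneg <;> linarith [hy.2]
  have ht1 : 0 ≤ 1 - t := by
    have : t ≤ 1 := by rw [ht, div_le_one hrp]; linarith [hy.1]
    linarith
  have hc := hg.2 hp hr ht0 ht1 (by ring)
  simp only [smul_eq_mul] at hc
  have hxy : t * p + (1 - t) * r = y := by rw [ht]; field_simp; ring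
  rw [hxy] at hc
  calc ((r - y) * g p + (y - p) * g r) / (r - p) = t * g p + (1 - t) * g r := by
        rw [ht]; field_simp; ring
    _ ≤ g y := hc

lemma concave_extend_left {g : ℝ → ℝ} {s : Set ℝ} (hg : ConcaveOn ℝ s g) {p r y : ℝ}
    (hy : y ∈ s) (hp : p ∈ s) (hr : r ∈ s) (hyp : y ≤ p) (hpr : p < r) :
    g y ≤ ((r - y) * g p + (y - p) * g r) / (r - p) := by
  have hry : y < r := lt_of_le_of_lt hyp hpr
  have hrp : (0:ℝ) < r - p := by linarith
  have hry0 : (0:ℝ) < r - y := by linarith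
  set t := (r - p) / (r - y) with ht
  have ht0 : 0 ≤ t := by positivity
  have htpos : 0 < t := by positivity
  have ht1 : 0 ≤ 1 - t := by
    have : t ≤ 1 := by rw [ht, div_le_one hry0]; linarith
    linarith
  have hc := hg.2 hy hr ht0 ht1 (by ring)
  simp only [smul_eq_mul] at hc
  have hxy : t * y + (1 - t) * r = p := by rw [ht]; field_simp; ring
  rw [hxy] at hc
  -- hc : t * g y + (1 - t) * g r ≤ g p
  have key : g y ≤ (g p - (1 - t) * g r) / t := by
    rw [le_div_iff₀ htpos]; linarith
  calc g y ≤ (g p - (1 - t) * g r) / t := key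
    _ = ((r - y) * g p + (y - p) * g r) / (r - p) := by
        rw [ht]; field_simp; ring

lemma concave_extend_right {g : ℝ → ℝ} {s : Set ℝ} (hg : ConcaveOn ℝ s g) {p r y : ℝ}
    (hy : y ∈ s) (hp : p ∈ s) (hr : r ∈ s) (hry : r ≤ y) (hpr : p < r) :
    g y ≤ ((r - y) * g p + (y - p) * g r) / (r - p) := by
  have hpy : p < y := lt_of_lt_of_le hpr hry
  have hrp : (0:ℝ) < r - p := by linarith
  have hyp0 : (0:ℝ) < y - p := by linarith
  set t := (r - p) / (y - p) with ht
  have ht0 : 0 ≤ t := by positivity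
  have htpos : 0 < t := by positivity
  have ht1 : 0 ≤ 1 - t := by
    have : t ≤ 1 := by rw [ht, div_le_one hyp0]; linarith
    linarith
  have hc := hg.2 hy hp ht0 ht1 (by ring)
  simp only [smul_eq_mul] at hc
  have hxy : t * y + (1 - t) * p = r := by rw [ht]; field_simp; ring
  rw [hxy] at hc
  -- hc : t * g y + (1 - t) * g p ≤ g r
  have key : g y ≤ (g r - (1 - t) * g p) / t := by
    rw [le_div_iff₀ htpos]; linarith
  calc g y ≤ (g r - (1 - t) * g p) / t := key
    _ = ((r - y) * g p + (y - p) * g r) / (r - p) := by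
        rw [ht]; field_simp; ring

lemma integral_weight_affine (p r s u v : ℝ) :
    ∫ x in u..v, (p - x) * (r + s * x) =
      p*r*(v-u) + (p*s - r)*(v^2-u^2)/2 - s*(v^3-u^3)/3 := by
  have h1 : (fun x : ℝ => (p - x) * (r + s * x)) =
      fun x : ℝ => p*r + ((p*s - r)*x + (-s)*x^2) := by
    funext x; ring
  have i2 : IntervalIntegrable (fun x : ℝ => (p*s - r)*x) volume u v := by
    apply Continuous.intervalIntegrable; continuity
  have i3 : IntervalIntegrable (fun x : ℝ => (-s)*x^2) volume u v := by
    apply Continuous.intervalIntegrable; continuity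
  rw [h1, integral_add (intervalIntegrable_const) (i2.add i3), integral_add i2 i3,
    intervalIntegral.integral_const, intervalIntegral.integral_const_mul, intervalIntegral.integral_const_mul, integral_id, integral_pow]
  simp only [smul_eq_mul]
  push_cast
  ring

set_option maxHeartbeats 1000000 in
lemma trap {f f' : ℝ → ℝ} {a b : ℝ} (hab : a < b)
    (hf : ∀ y ∈ Icc a b, HasDerivAt f (f' y) y)
    (hint : IntervalIntegrable f' volume a b)
    (hg : ConcaveOn ℝ (Icc a b) (fun y => |f' y|)) :
    |(∫ u in a..b, f u) - (f a + f b) / 2 * (b - a)| ≤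
      (b - a)^2 / 8 * (|f' ((3*a+b)/4)| + |f' ((a+3*b)/4)|) := by
  set g : ℝ → ℝ := fun y => |f' y| with hgdef
  set m : ℝ := (a+b)/2 with hm
  set z₁ : ℝ := (3*a+b)/4 with hz1
  set z₂ : ℝ := (a+3*b)/4 with hz2
  have haz1 : a < z₁ := by rw [hz1]; linarith
  have hz1m : z₁ < m := by rw [hz1, hm]; linarith
  have hmz2 : m < z₂ := by rw [hm, hz2]; linarith
  have hz2b : z₂ < b := by rw [hz2]; linarith
  have hz12 : z₁ < z₂ := by linarith
  have hamem : a ∈ Icc a b := ⟨le_refl _, hab.le⟩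
  have hbmem : b ∈ Icc a b := ⟨hab.le, le_refl _⟩
  have hmmem : m ∈ Icc a b := ⟨by linarith, by linarith⟩
  have hz1mem : z₁ ∈ Icc a b := ⟨by linarith, by linarith⟩
  have hz2mem : z₂ ∈ Icc a b := ⟨by linarith, by linarith⟩
  -- integrability of f and g
  have gInt : IntervalIntegrable g volume a b := by
    simpa [hgdef, Real.norm_eq_abs] using hint.norm
  -- integration by parts
  have hibp := integral_mul_deriv_eq_deriv_mul (u := fun x => x - m) (v := f)
      (u' := fun _ => (1:ℝ)) (v' := f')
      (fun x _ => (hasDerivAt_id x).sub_const m)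
      (fun x hx => hf x (by rwa [uIcc_of_le hab.le] at hx))
      intervalIntegrable_const hint
  have hE : (∫ u in a..b, f u) - (f a + f b)/2*(b-a) = -∫ x in a..b, (x-m)*f' x := by
    rw [hibp]
    simp only [one_mul]
    rw [hm]; ring
  have habs : |(∫ u in a..b, f u) - (f a + f b)/2*(b-a)| ≤ ∫ x in a..b, |x - m| * g x := by
    rw [hE, abs_neg]
    calc |∫ x in a..b, (x-m)*f' x| ≤ ∫ x in a..b, |(x-m)*f' x| :=
          abs_integral_le_integral_abs hab.le
      _ = ∫ x in a..b, |x-m| * g x := by simp only [abs_mul, hgdef]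
  -- the chord line
  set G₁ : ℝ := g z₁ with hG1
  set G₂ : ℝ := g z₂ with hG2
  have hz21 : z₂ - z₁ = (b-a)/2 := by rw [hz1, hz2]; ring
  have hz21ne : z₂ - z₁ ≠ 0 := by rw [hz21]; exact ne_of_gt (by linarith : (0:ℝ) < (b-a)/2)
  set s : ℝ := (G₂ - G₁)/(z₂ - z₁) with hs
  set r : ℝ := (z₂*G₁ - z₁*G₂)/(z₂ - z₁) with hr
  set l : ℝ → ℝ := fun y => r + s*y with hl
  have hlform : ∀ y, l y = ((z₂ - y)*G₁ + (y - z₁)*G₂)/(z₂ - z₁) := by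
    intro y; rw [hl]; simp only; rw [hs, hr]; field_simp; ring
  have hlz1 : l z₁ = G₁ := by
    rw [hlform, div_eq_iff hz21ne]; ring
  have hlz2 : l z₂ = G₂ := by
    rw [hlform, div_eq_iff hz21ne]; ring
  set d : ℝ → ℝ := fun y => g y - l y with hd
  -- concavity facts
  have F1 : ∀ y ∈ Icc z₁ z₂, 0 ≤ d y := by
    intro y hy
    have := concave_chord hg hz1mem hz2mem hz12 hy
    rw [← hlform] at this
    simp only [hd]; linarith
  have F2 : ∀ y ∈ Icc a z₁, d y ≤ 0 := by
    intro y hy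
    have := concave_extend_left hg ⟨hy.1, by linarith [hy.2]⟩ hz1mem hz2mem hy.2 hz12
    rw [← hlform] at this
    simp only [hd]; linarith
  have F2' : ∀ y ∈ Icc z₂ b, d y ≤ 0 := by
    intro y hy
    have := concave_extend_right hg ⟨by linarith [hy.1], hy.2⟩ hz1mem hz2mem hy.1 hz12
    rw [← hlform] at this
    simp only [hd]; linarith
  have laff1 : ∀ y : ℝ, l y + l (2*z₁ - y) = 2*G₁ := by
    intro y
    have h1 : l y + l (2*z₁ - y) = 2*(l z₁) := by rw [hl]; simp only; ring
    rw [h1, hlz1]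
  have laff2 : ∀ y : ℝ, l y + l (2*z₂ - y) = 2*G₂ := by
    intro y
    have h1 : l y + l (2*z₂ - y) = 2*(l z₂) := by rw [hl]; simp only; ring
    rw [h1, hlz2]
  have F3 : ∀ y ∈ Icc a z₁, d y + d (2*z₁ - y) ≤ 0 := by
    intro y hy
    have hmem2 : (2*z₁ - y) ∈ Icc a b := ⟨by linarith [hy.2], by linarith [hy.1]⟩
    have hgc := hg.2 (⟨hy.1, by linarith [hy.2]⟩ : y ∈ Icc a b) hmem2
      (by norm_num : (0:ℝ) ≤ 1/2) (by norm_num : (0:ℝ) ≤ 1/2) (by norm_num)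
    simp only [smul_eq_mul] at hgc
    rw [show (1/2 : ℝ) * y + (1/2 : ℝ) * (2*z₁ - y) = z₁ by ring] at hgc
    have := laff1 y
    simp only [hd]
    rw [← hG1] at hgc
    linarith
  have F3' : ∀ y ∈ Icc z₂ b, d y + d (2*z₂ - y) ≤ 0 := by
    intro y hy
    have hmem2 : (2*z₂ - y) ∈ Icc a b := ⟨by linarith [hy.2], by linarith [hy.1]⟩
    have hgc := hg.2 (⟨by linarith [hy.1], hy.2⟩ : y ∈ Icc a b) hmem2
      (by norm_num : (0:ℝ) ≤ 1/2) (by norm_num : (0:ℝ) ≤ 1/2) (by norm_num)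
    simp only [smul_eq_mul] at hgc
    rw [show (1/2 : ℝ) * y + (1/2 : ℝ) * (2*z₂ - y) = z₂ by ring] at hgc
    have := laff2 y
    simp only [hd]
    rw [← hG2] at hgc
    linarith
  -- integrability helpers
  have lcont : Continuous l := by rw [hl]; exact continuous_const.add (continuous_const.mul continuous_id)
  have dInt : IntervalIntegrable d volume a b := by
    rw [hd]; exact gInt.sub (lcont.intervalIntegrable _ _)
  have hsub : ∀ {u v : ℝ}, u ∈ Icc a b → v ∈ Icc a b →
      ∀ {F : ℝ → ℝ}, IntervalIntegrable F volume a b → IntervalIntegrable F volume u v := by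
    intro u v hu hv F hF
    exact hF.mono_set (uIcc_subset_uIcc (by rwa [uIcc_of_le hab.le])
      (by rwa [uIcc_of_le hab.le]))
  have mulInt : ∀ (w F : ℝ → ℝ), Continuous w → IntervalIntegrable F volume a b →
      ∀ {u v : ℝ}, u ∈ Icc a b → v ∈ Icc a b →
      IntervalIntegrable (fun x => w x * F x) volume u v := by
    intro w F hw hF u v hu hv
    exact (hsub hu hv hF).continuousOn_mul hw.continuousOn
  -- left piece reflection
  have e2 : 2*z₁ - a = m := by rw [hz1, hm]; ring
  have e2' : 2*z₁ - m = a := by rw [hz1, hm]; ring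
  have e3 : ∀ x : ℝ, m - (2*z₁ - x) = x - a := by intro x; rw [hz1, hm]; ring
  have refl_raw := integral_comp_sub_left (a := a) (b := z₁)
      (fun y => (m - y) * d y) (2*z₁)
  rw [show 2*z₁ - z₁ = z₁ by ring, e2] at refl_raw
  have reflL : ∫ x in z₁..m, (m - x) * d x = ∫ x in a..z₁, (x - a) * d (2*z₁ - x) := by
    rw [← refl_raw]
    simp only [e3]
  have IL2 : IntervalIntegrable (fun x => (x - a) * d (2*z₁ - x)) volume a z₁ := by
    have h0 : IntervalIntegrable d volume z₁ m := hsub hz1mem hmmem dInt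
    have h1 := h0.comp_sub_left (2*z₁)
    rw [show 2*z₁ - z₁ = z₁ by ring, e2'] at h1
    exact h1.symm.continuousOn_mul (continuous_id.sub continuous_const : Continuous fun x : ℝ => x - a).continuousOn
  have IL1 : IntervalIntegrable (fun x => (m - x) * d x) volume a z₁ :=
    mulInt _ _ (continuous_const.sub continuous_id) dInt hamem hz1mem
  have boundL : ∫ x in a..z₁, ((m - x) * d x + (x - a) * d (2*z₁ - x)) ≤ 0 := by
    have hmono := integral_mono_on (f := fun x => (m - x) * d x + (x - a) * d (2*z₁ - x))
      (g := fun _ => (0:ℝ)) (a := a) (b := z₁) (μ := volume) haz1.le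
      (IL1.add IL2) intervalIntegrable_const ?_
    · simpa using hmono
    intro y hy
    have hd1 : d y ≤ 0 := F2 y hy
    have hd2 : 0 ≤ d (2*z₁ - y) := F1 _ ⟨by linarith [hy.2], by linarith [hy.1]⟩
    have hd3 := F3 y hy
    have hma : m + a = 2*z₁ := by rw [hm, hz1]; ring
    have t1 : (y - a) * (d y + d (2*z₁ - y)) ≤ 0 :=
      mul_nonpos_iff.2 (Or.inl ⟨by linarith [hy.1], hd3⟩)
    have t2 : (m + a - 2*y) * d y ≤ 0 :=
      mul_nonpos_iff.2 (Or.inl ⟨by linarith [hy.2], hd1⟩)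
    have t3 : (m - y) * d y + (y - a) * d (2*z₁ - y)
        = (y - a) * (d y + d (2*z₁ - y)) + (m + a - 2*y) * d y := by ring
    show (m - y) * d y + (y - a) * d (2 * z₁ - y) ≤ (0:ℝ)
    linarith [t1, t2, t3.le, t3.ge]
  have dL : ∫ x in a..m, (m - x) * d x ≤ 0 := by
    rw [← integral_add_adjacent_intervals (a := a) (b := z₁) (c := m) IL1
        (mulInt (fun x => m - x) d (continuous_const.sub continuous_id) dInt hz1mem hmmem), reflL,
      ← integral_add IL1 IL2]
    exact boundL
  -- right piece reflection
  have f2 : 2*z₂ - b = m := by rw [hz2, hm]; ring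
  have f2' : 2*z₂ - m = b := by rw [hz2, hm]; ring
  have f3 : ∀ x : ℝ, (2*z₂ - x) - m = b - x := by intro x; rw [hz2, hm]; ring
  have refl_rawR := integral_comp_sub_left (a := z₂) (b := b)
      (fun y => (y - m) * d y) (2*z₂)
  rw [show 2*z₂ - z₂ = z₂ by ring, f2] at refl_rawR
  have reflR : ∫ x in m..z₂, (x - m) * d x = ∫ x in z₂..b, (b - x) * d (2*z₂ - x) := by
    rw [← refl_rawR]
    simp only [f3]
  have IR2 : IntervalIntegrable (fun x => (b - x) * d (2*z₂ - x)) volume z₂ b := by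
    have h0 : IntervalIntegrable d volume m z₂ := hsub hmmem hz2mem dInt
    have h1 := h0.comp_sub_left (2*z₂)
    rw [show 2*z₂ - z₂ = z₂ by ring, f2'] at h1
    exact h1.symm.continuousOn_mul (continuous_const.sub continuous_id : Continuous fun x : ℝ => b - x).continuousOn
  have IR1 : IntervalIntegrable (fun x => (x - m) * d x) volume z₂ b :=
    mulInt _ _ (continuous_id.sub continuous_const) dInt hz2mem hbmem
  have boundR : ∫ x in z₂..b, ((b - x) * d (2*z₂ - x) + (x - m) * d x) ≤ 0 := by
    have hmono := integral_mono_on (f := fun x => (b - x) * d (2*z₂ - x) + (x - m) * d x)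
      (g := fun _ => (0:ℝ)) (a := z₂) (b := b) (μ := volume) hz2b.le
      (IR2.add IR1) intervalIntegrable_const ?_
    · simpa using hmono
    intro y hy
    have hd1 : d y ≤ 0 := F2' y hy
    have hd2 : 0 ≤ d (2*z₂ - y) := F1 _ ⟨by linarith [hy.2], by linarith [hy.1]⟩
    have hd3 := F3' y hy
    have hmb : m + b = 2*z₂ := by rw [hm, hz2]; ring
    have t1 : (b - y) * (d y + d (2*z₂ - y)) ≤ 0 :=
      mul_nonpos_iff.2 (Or.inl ⟨by linarith [hy.2], hd3⟩)
    have t2 : (2*y - m - b) * d y ≤ 0 :=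
      mul_nonpos_iff.2 (Or.inl ⟨by linarith [hy.1], hd1⟩)
    have t3 : (b - y) * d (2*z₂ - y) + (y - m) * d y
        = (b - y) * (d y + d (2*z₂ - y)) + (2*y - m - b) * d y := by ring
    show (b - y) * d (2 * z₂ - y) + (y - m) * d y ≤ (0:ℝ)
    linarith [t1, t2, t3.le, t3.ge]
  have dR : ∫ x in m..b, (x - m) * d x ≤ 0 := by
    rw [← integral_add_adjacent_intervals (a := m) (b := z₂) (c := b)
        (mulInt (fun x => x - m) d (continuous_id.sub continuous_const) dInt hmmem hz2mem) IR1, reflR,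
      ← integral_add IR2 IR1]
    exact boundR
  -- the affine integral value
  have hlsum : (∫ x in a..m, (m - x) * l x) + (∫ x in m..b, (x - m) * l x)
      = (b-a)^2/8 * (G₁ + G₂) := by
    have hneg : ∫ x in m..b, (x - m) * l x = -∫ x in m..b, (m - x) * l x := by
      rw [← intervalIntegral.integral_neg]
      apply integral_congr
      intro y _
      simp only [hl]; ring
    rw [hneg, ← hlz1, ← hlz2]
    simp only [hl]
    rw [integral_weight_affine, integral_weight_affine, hm, hz1, hz2]
    ring
  -- combine
  have gsplitL : ∫ x in a..m, (m - x) * g x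
      = (∫ x in a..m, (m - x) * l x) + ∫ x in a..m, (m - x) * d x := by
    rw [← integral_add (mulInt (fun x => m - x) l (continuous_const.sub continuous_id) (lcont.intervalIntegrable _ _) hamem hmmem)
      (mulInt (fun x => m - x) d (continuous_const.sub continuous_id) dInt hamem hmmem)]
    apply integral_congr
    intro y _
    simp only [hd]; ring
  have gsplitR : ∫ x in m..b, (x - m) * g x
      = (∫ x in m..b, (x - m) * l x) + ∫ x in m..b, (x - m) * d x := by
    rw [← integral_add (mulInt (fun x => x - m) l (continuous_id.sub continuous_const) (lcont.intervalIntegrable _ _) hmmem hbmem)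
      (mulInt (fun x => x - m) d (continuous_id.sub continuous_const) dInt hmmem hbmem)]
    apply integral_congr
    intro y _
    simp only [hd]; ring
  have wgInt1 : IntervalIntegrable (fun x => |x - m| * g x) volume a m :=
    mulInt _ _ ((continuous_id.sub continuous_const).abs) gInt hamem hmmem
  have wgInt2 : IntervalIntegrable (fun x => |x - m| * g x) volume m b :=
    mulInt _ _ ((continuous_id.sub continuous_const).abs) gInt hmmem hbmem
  have c1 : ∫ x in a..m, |x - m| * g x = ∫ x in a..m, (m - x) * g x := by
    apply integral_congr
    intro y hy
    rw [uIcc_of_le (by linarith : a ≤ m)] at hy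
    show |y - m| * g y = (m - y) * g y
    rw [abs_of_nonpos (by linarith [hy.2] : y - m ≤ 0)]
    ring
  have c2 : ∫ x in m..b, |x - m| * g x = ∫ x in m..b, (x - m) * g x := by
    apply integral_congr
    intro y hy
    rw [uIcc_of_le (by linarith : m ≤ b)] at hy
    show |y - m| * g y = (y - m) * g y
    rw [abs_of_nonneg (by linarith [hy.1] : (0:ℝ) ≤ y - m)]
  have main2 : ∫ x in a..b, |x - m| * g x ≤ (b-a)^2/8 * (G₁ + G₂) := by
    rw [← integral_add_adjacent_intervals (a := a) (b := m) (c := b) wgInt1 wgInt2, c1, c2,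
      gsplitL, gsplitR]
    linarith [dL, dR, hlsum.le, hlsum.ge]
  calc |(∫ u in a..b, f u) - (f a + f b) / 2 * (b - a)|
      ≤ ∫ x in a..b, |x - m| * g x := habs
    _ ≤ (b-a)^2/8 * (G₁ + G₂) := main2

theorem prop_4_2 (f f' : ℝ → ℝ) (a b c d : ℝ) (hab : a < b)
    (hca : c < a) (hbd : b < d)
    (hf : ∀ y ∈ Set.Ioo c d, HasDerivAt f (f' y) y)
    (hint : IntervalIntegrable f' volume a b)
    (q : ℝ) (hq : 1 < q)
    (hconc : ConcaveOn ℝ (Set.Icc a b) (fun y => |f' y| ^ q))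
    (n : ℕ) (x : ℕ → ℝ) (hx0 : x 0 = a) (hxn : x n = b)
    (hmono : ∀ i < n, x i < x (i + 1)) :
    |(∫ u in a..b, f u) - ∑ i ∈ Finset.range n,
        (f (x i) + f (x (i + 1))) / 2 * (x (i + 1) - x i)|
      ≤ ((q - 1) / (2 * q - 1)) ^ ((q - 1) / q) *
        ∑ i ∈ Finset.range n,
          ((x (i + 1) - x i) ^ 2 / 4) *
            (|f' ((3 * x i + x (i + 1)) / 4)| + |f' ((x i + 3 * x (i + 1)) / 4)|) := by
  have habsc : ConcaveOn ℝ (Set.Icc a b) (fun y => |f' y|) := abs_concave_of_rpow hq hconc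
  have hxmono : ∀ j ≤ n, ∀ i ≤ j, x i ≤ x j := by
    intro j
    induction j with
    | zero => intro _ i hi; rw [Nat.le_zero.mp hi]
    | succ j ih =>
      intro hj i hij
      rcases eq_or_lt_of_le hij with h | h
      · rw [h]
      · exact le_trans (ih (by omega) i (by omega)) (hmono j (by omega)).le
  have hmem : ∀ i ≤ n, x i ∈ Icc a b := by
    intro i hi
    constructor
    · rw [← hx0]; exact hxmono i hi 0 (Nat.zero_le _)
    · rw [← hxn]; exact hxmono n le_rfl i hi
  have hfcont : ContinuousOn f (Icc a b) := fun y hy =>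
    ((hf y ⟨lt_of_lt_of_le hca hy.1, lt_of_le_of_lt hy.2 hbd⟩).continuousAt).continuousWithinAt
  have hsubIcc : ∀ i < n, Icc (x i) (x (i+1)) ⊆ Icc a b := by
    intro i hi
    exact Icc_subset_Icc (hmem i (by omega)).1 (hmem (i+1) (by omega)).2
  have hfint_sub : ∀ k < n, IntervalIntegrable f volume (x k) (x (k+1)) := by
    intro k hk
    apply ContinuousOn.intervalIntegrable
    rw [uIcc_of_le (hmono k hk).le]
    exact hfcont.mono (hsubIcc k hk)
  have htel : ∑ i ∈ Finset.range n, ∫ u in x i..x (i+1), f u = ∫ u in a..b, f u := by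
    have h := intervalIntegral.sum_integral_adjacent_intervals (a := x) (n := n) hfint_sub
    rw [hx0, hxn] at h
    exact h
  have hC : (1:ℝ)/2 ≤ ((q - 1) / (2 * q - 1)) ^ ((q - 1) / q) := const_ge_half hq
  have hterm : ∀ i < n,
      |(∫ u in x i..x (i+1), f u) - (f (x i) + f (x (i + 1))) / 2 * (x (i + 1) - x i)|
        ≤ (x (i+1) - x i)^2 / 8 *
          (|f' ((3 * x i + x (i + 1)) / 4)| + |f' ((x i + 3 * x (i + 1)) / 4)|) := by
    intro i hi
    have hab' : x i < x (i+1) := hmono i hi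
    have hf' : ∀ y ∈ Icc (x i) (x (i+1)), HasDerivAt f (f' y) y := by
      intro y hy
      have hy' := hsubIcc i hi hy
      exact hf y ⟨lt_of_lt_of_le hca hy'.1, lt_of_le_of_lt hy'.2 hbd⟩
    have hint' : IntervalIntegrable f' volume (x i) (x (i+1)) := by
      apply hint.mono_set
      rw [uIcc_of_le hab'.le, uIcc_of_le hab.le]
      exact hsubIcc i hi
    have hconc' : ConcaveOn ℝ (Icc (x i) (x (i+1))) (fun y => |f' y|) :=
      habsc.subset (hsubIcc i hi) (convex_Icc _ _)
    exact trap hab' hf' hint' hconc'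
  calc |(∫ u in a..b, f u) - ∑ i ∈ Finset.range n,
        (f (x i) + f (x (i + 1))) / 2 * (x (i + 1) - x i)|
      = |∑ i ∈ Finset.range n, ((∫ u in x i..x (i+1), f u)
          - (f (x i) + f (x (i + 1))) / 2 * (x (i + 1) - x i))| := by
        rw [Finset.sum_sub_distrib, htel]
    _ ≤ ∑ i ∈ Finset.range n, |(∫ u in x i..x (i+1), f u)
          - (f (x i) + f (x (i + 1))) / 2 * (x (i + 1) - x i)| :=
        Finset.abs_sum_le_sum_abs _ _
    _ ≤ ∑ i ∈ Finset.range n, ((q - 1) / (2 * q - 1)) ^ ((q - 1) / q) *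
          (((x (i + 1) - x i) ^ 2 / 4) *
            (|f' ((3 * x i + x (i + 1)) / 4)| + |f' ((x i + 3 * x (i + 1)) / 4)|)) := by
        apply Finset.sum_le_sum
        intro i hi
        rw [Finset.mem_range] at hi
        have h1 := hterm i hi
        have hs : 0 ≤ |f' ((3 * x i + x (i + 1)) / 4)| + |f' ((x i + 3 * x (i + 1)) / 4)| := by
          positivity
        have h2 : (x (i+1) - x i)^2 / 8 *
              (|f' ((3 * x i + x (i + 1)) / 4)| + |f' ((x i + 3 * x (i + 1)) / 4)|)
            = (1/2) * (((x (i + 1) - x i) ^ 2 / 4) *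
              (|f' ((3 * x i + x (i + 1)) / 4)| + |f' ((x i + 3 * x (i + 1)) / 4)|)) := by
          ring
        have h3 : (0:ℝ) ≤ ((x (i + 1) - x i) ^ 2 / 4) *
            (|f' ((3 * x i + x (i + 1)) / 4)| + |f' ((x i + 3 * x (i + 1)) / 4)|) := by
          positivity
        calc |(∫ u in x i..x (i+1), f u)
              - (f (x i) + f (x (i + 1))) / 2 * (x (i + 1) - x i)|
            ≤ (x (i+1) - x i)^2 / 8 *
              (|f' ((3 * x i + x (i + 1)) / 4)| + |f' ((x i + 3 * x (i + 1)) / 4)|) := h1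
          _ = (1/2) * (((x (i + 1) - x i) ^ 2 / 4) *
              (|f' ((3 * x i + x (i + 1)) / 4)| + |f' ((x i + 3 * x (i + 1)) / 4)|)) := h2
          _ ≤ ((q - 1) / (2 * q - 1)) ^ ((q - 1) / q) *
              (((x (i + 1) - x i) ^ 2 / 4) *
              (|f' ((3 * x i + x (i + 1)) / 4)| + |f' ((x i + 3 * x (i + 1)) / 4)|)) :=
            mul_le_mul_of_nonneg_right hC h3
    _ = ((q - 1) / (2 * q - 1)) ^ ((q - 1) / q) *
        ∑ i ∈ Finset.range n,
          ((x (i + 1) - x i) ^ 2 / 4) *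
            (|f' ((3 * x i + x (i + 1)) / 4)| + |f' ((x i + 3 * x (i + 1)) / 4)|) :=
      (Finset.mul_sum _ _ _).symm
end

section
/- Let f be differentiable with f' integrable on [a,b], q ≥ 1, and |f'|^q concave on [a,b]. For every partition a = x₀ < x₁ < ... < xₙ = b, the trapezoidal error satisfies |∫_a^b f(x) dx - ∑_{i=0}^{n-1} (f(x_i)+f(x_{i+1}))/2 · (x_{i+1}-x_i)| ≤ (1/8)·∑_{i=0}^{n-1} (x_{i+1}-x_i)²·(|f'((5x_i+x_{i+1})/6)| + |f'((x_i+5x_{i+1})/6)|). -/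
open MeasureTheory intervalIntegral

private lemma integral_quadratic (α β γ u v : ℝ) :
    ∫ t in u..v, (α + β * t + γ * t ^ 2) =
      α * (v - u) + β * (v ^ 2 - u ^ 2) / 2 + γ * (v ^ 3 - u ^ 3) / 3 := by
  have h : ∀ t : ℝ, HasDerivAt (fun s => α * s + β / 2 * s ^ 2 + γ / 3 * s ^ 3)
      (α + β * t + γ * t ^ 2) t := by
    intro t
    have h1 : HasDerivAt (fun s : ℝ => α * s) (α * 1) t := (hasDerivAt_id t).const_mul α
    have h2 : HasDerivAt (fun s : ℝ => β / 2 * s ^ 2) (β / 2 * (↑(2:ℕ) * t ^ 1)) t :=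
      (hasDerivAt_pow 2 t).const_mul (β / 2)
    have h3 : HasDerivAt (fun s : ℝ => γ / 3 * s ^ 3) (γ / 3 * (↑(3:ℕ) * t ^ 2)) t :=
      (hasDerivAt_pow 3 t).const_mul (γ / 3)
    refine ((h1.add h2).add h3).congr_deriv ?_
    push_cast
    ring
  rw [intervalIntegral.integral_eq_sub_of_hasDerivAt (fun t _ => h t)
    (Continuous.intervalIntegrable (by continuity) u v)]
  ring

private lemma exists_support_line {g : ℝ → ℝ} {u v p : ℝ}
    (hg : ConcaveOn ℝ (Set.Icc u v) g) (hp : p ∈ Set.Ioo u v) :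
    ∃ k : ℝ, ∀ t ∈ Set.Icc u v, g t ≤ g p + k * (t - p) := by
  set S : Set ℝ := (fun t => (g t - g p) / (t - p)) '' Set.Ioc p v with hS
  have hpuv : p ∈ Set.Icc u v := ⟨hp.1.le, hp.2.le⟩
  have hne : S.Nonempty := ⟨_, ⟨v, ⟨hp.2, le_refl v⟩, rfl⟩⟩
  have hub : ∀ s ∈ S, s ≤ (g p - g u) / (p - u) := by
    rintro s ⟨t, ht, rfl⟩
    exact hg.slope_anti_adjacent ⟨le_refl u, hp.1.le.trans hp.2.le⟩
      ⟨(hp.1.trans ht.1).le, ht.2⟩ hp.1 ht.1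
  have hbdd : BddAbove S := ⟨_, hub⟩
  refine ⟨sSup S, ?_⟩
  intro t ht
  rcases lt_trichotomy t p with h | h | h
  · have hk : sSup S ≤ (g p - g t) / (p - t) := by
      apply csSup_le hne
      rintro s ⟨r, hr, rfl⟩
      exact hg.slope_anti_adjacent ht ⟨(hp.1.trans hr.1).le, hr.2⟩ h hr.1
    have h2 : sSup S * (p - t) ≤ g p - g t := (le_div_iff₀ (by linarith)).1 hk
    have h3 : sSup S * (t - p) = -(sSup S * (p - t)) := by ring
    linarith
  · simp [h]
  · have hmem : (g t - g p) / (t - p) ∈ S := ⟨t, ⟨h, ht.2⟩, rfl⟩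
    have hk : (g t - g p) / (t - p) ≤ sSup S := le_csSup hbdd hmem
    have h2 : g t - g p ≤ sSup S * (t - p) := (div_le_iff₀ (by linarith)).1 hk
    linarith

private lemma jensen_weighted {g w : ℝ → ℝ} {u v p : ℝ} (huv : u < v) (hp : p ∈ Set.Ioo u v)
    (hg : ConcaveOn ℝ (Set.Icc u v) g)
    (hgint : IntervalIntegrable g volume u v)
    (hw : ContinuousOn w (Set.Icc u v)) (hw0 : ∀ t ∈ Set.Icc u v, 0 ≤ w t)
    (hcent : (∫ t in u..v, w t * (t - p)) = 0) :
    (∫ t in u..v, w t * g t) ≤ (∫ t in u..v, w t) * g p := by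
  obtain ⟨k, hk⟩ := exists_support_line hg hp
  have huIcc : Set.uIcc u v = Set.Icc u v := Set.uIcc_of_le huv.le
  have hwc : ContinuousOn w (Set.uIcc u v) := huIcc ▸ hw
  have hint1 : IntervalIntegrable (fun t => w t * g t) volume u v := hgint.continuousOn_mul hwc
  have hint2 : IntervalIntegrable (fun t => w t * (g p + k * (t - p))) volume u v :=
    (hwc.mul (by fun_prop)).intervalIntegrable
  have hmono := intervalIntegral.integral_mono_on huv.le hint1 hint2
    (fun t ht => mul_le_mul_of_nonneg_left (hk t ht) (hw0 t ht))
  have heq : (fun t => w t * (g p + k * (t - p)))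
      = fun t => g p * w t + k * (w t * (t - p)) := by funext t; ring
  rw [heq, intervalIntegral.integral_add (f := fun t => g p * w t)
      (g := fun t => k * (w t * (t - p))) ((continuousOn_const.mul hwc).intervalIntegrable)
      ((continuousOn_const.mul (hwc.mul (by fun_prop))).intervalIntegrable),
    intervalIntegral.integral_const_mul, intervalIntegral.integral_const_mul, hcent,
    mul_zero, add_zero] at hmono
  linarith [hmono]

private lemma trap_est (f f' : ℝ → ℝ) (a b c d u v : ℝ) (hca : c < a) (hbd : b < d)
    (hf : ∀ y ∈ Set.Ioo c d, HasDerivAt f (f' y) y)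
    (hint : IntervalIntegrable f' volume a b)
    (hg : ConcaveOn ℝ (Set.Icc a b) (fun y => |f' y|))
    (hau : a ≤ u) (huv : u < v) (hvb : v ≤ b) :
    |(∫ t in u..v, f t) - (f u + f v) / 2 * (v - u)|
      ≤ (v - u) ^ 2 / 8 * (|f' ((5 * u + v) / 6)| + |f' ((u + 5 * v) / 6)|) := by
  set m : ℝ := (u + v) / 2 with hm
  have hum : u < m := by rw [hm]; linarith
  have hmv : m < v := by rw [hm]; linarith
  have hab' : a ≤ b := le_trans (le_trans hau huv.le) hvb
  have hsub : Set.Icc u v ⊆ Set.Ioo c d := fun t ht => ⟨by linarith [ht.1], by linarith [ht.2]⟩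
  have huv' : Set.uIcc u v = Set.Icc u v := Set.uIcc_of_le huv.le
  have hIab : Set.uIcc a b = Set.Icc a b := Set.uIcc_of_le hab'
  have hfc : ContinuousOn f (Set.Icc u v) :=
    fun t ht => ((hf t (hsub ht)).continuousAt).continuousWithinAt
  have hfint : IntervalIntegrable f volume u v := (huv' ▸ hfc).intervalIntegrable
  have hf'uv : IntervalIntegrable f' volume u v := by
    refine hint.mono_set ?_
    rw [huv', hIab]; exact Set.Icc_subset_Icc hau hvb
  have hderiv : ∀ t ∈ Set.uIcc u v, HasDerivAt (fun s => s - m) (1:ℝ) t :=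
    fun t _ => (hasDerivAt_id t).sub_const m
  have hfd : ∀ t ∈ Set.uIcc u v, HasDerivAt f (f' t) t := fun t ht => hf t (hsub (huv' ▸ ht))
  have hmul : IntervalIntegrable (fun t => (t - m) * f' t) volume u v :=
    hf'uv.continuousOn_mul (by fun_prop)
  have hibp := intervalIntegral.integral_deriv_mul_eq_sub hderiv hfd
    (intervalIntegrable_const) hf'uv
  simp only [one_mul] at hibp
  rw [intervalIntegral.integral_add hfint hmul] at hibp
  have key : (∫ t in u..v, f t) - (f u + f v) / 2 * (v - u)
      = -(∫ t in u..v, (t - m) * f' t) := by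
    have hm2 : (v - m) * f v - (u - m) * f u = (f u + f v) / 2 * (v - u) := by
      rw [hm]; ring
    linarith
  rw [key, abs_neg]
  have hsub1 : Set.uIcc u m ⊆ Set.uIcc u v := by
    rw [huv', Set.uIcc_of_le hum.le]; exact Set.Icc_subset_Icc le_rfl hmv.le
  have hsub2 : Set.uIcc m v ⊆ Set.uIcc u v := by
    rw [huv', Set.uIcc_of_le hmv.le]; exact Set.Icc_subset_Icc hum.le le_rfl
  have hmul1 : IntervalIntegrable (fun t => (t - m) * f' t) volume u m := hmul.mono_set hsub1
  have hmul2 : IntervalIntegrable (fun t => (t - m) * f' t) volume m v := hmul.mono_set hsub2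
  rw [← intervalIntegral.integral_add_adjacent_intervals hmul1 hmul2]
  -- bound piece 1
  have habs1 : |∫ t in u..m, (t - m) * f' t| ≤ ∫ t in u..m, (m - t) * |f' t| := by
    refine (intervalIntegral.abs_integral_le_integral_abs hum.le).trans_eq ?_
    apply intervalIntegral.integral_congr
    intro t ht
    rw [Set.uIcc_of_le hum.le] at ht
    show |(t - m) * f' t| = (m - t) * |f' t|
    rw [abs_mul, abs_of_nonpos (by linarith [ht.2] : t - m ≤ 0), neg_sub]
  have habs2 : |∫ t in m..v, (t - m) * f' t| ≤ ∫ t in m..v, (t - m) * |f' t| := by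
    refine (intervalIntegral.abs_integral_le_integral_abs hmv.le).trans_eq ?_
    apply intervalIntegral.integral_congr
    intro t ht
    rw [Set.uIcc_of_le hmv.le] at ht
    show |(t - m) * f' t| = (t - m) * |f' t|
    rw [abs_mul, abs_of_nonneg (by linarith [ht.1] : (0:ℝ) ≤ t - m)]
  have hgint1 : IntervalIntegrable (fun t => |f' t|) volume u m := (hf'uv.mono_set hsub1).abs
  have hgint2 : IntervalIntegrable (fun t => |f' t|) volume m v := (hf'uv.mono_set hsub2).abs
  have hj1 : (∫ t in u..m, (m - t) * |f' t|) ≤ (v - u) ^ 2 / 8 * |f' ((5 * u + v) / 6)| := by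
    have hp1 : (5 * u + v) / 6 ∈ Set.Ioo u m := ⟨by linarith, by rw [hm]; linarith⟩
    have hgc : ConcaveOn ℝ (Set.Icc u m) (fun y => |f' y|) :=
      hg.subset (Set.Icc_subset_Icc hau (by linarith)) (convex_Icc _ _)
    have hcent : (∫ t in u..m, (m - t) * (t - (5 * u + v) / 6)) = 0 := by
      have he : (fun t : ℝ => (m - t) * (t - (5 * u + v) / 6))
          = fun t => (-(m * ((5 * u + v) / 6)) + (m + (5 * u + v) / 6) * t + (-1) * t ^ 2) := by
        funext t; ring
      rw [he, integral_quadratic, hm]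
      field_simp
      ring
    have hJ := jensen_weighted hum hp1 hgc hgint1 (by fun_prop)
      (fun t ht => by linarith [ht.2]) hcent
    have hwint : (∫ t in u..m, (m - t)) = (v - u) ^ 2 / 8 := by
      have he : (fun t : ℝ => m - t) = fun t => (m + (-1) * t + 0 * t ^ 2) := by funext t; ring
      rw [he, integral_quadratic, hm]; ring
    rw [hwint] at hJ
    exact hJ
  have hj2 : (∫ t in m..v, (t - m) * |f' t|) ≤ (v - u) ^ 2 / 8 * |f' ((u + 5 * v) / 6)| := by
    have hp2 : (u + 5 * v) / 6 ∈ Set.Ioo m v := ⟨by rw [hm]; linarith, by linarith⟩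
    have hgc : ConcaveOn ℝ (Set.Icc m v) (fun y => |f' y|) :=
      hg.subset (Set.Icc_subset_Icc (by linarith) hvb) (convex_Icc _ _)
    have hcent : (∫ t in m..v, (t - m) * (t - (u + 5 * v) / 6)) = 0 := by
      have he : (fun t : ℝ => (t - m) * (t - (u + 5 * v) / 6))
          = fun t => (m * ((u + 5 * v) / 6) + (-(m + (u + 5 * v) / 6)) * t + 1 * t ^ 2) := by
        funext t; ring
      rw [he, integral_quadratic, hm]
      field_simp
      ring
    have hJ := jensen_weighted hmv hp2 hgc hgint2 (by fun_prop)
      (fun t ht => by linarith [ht.1]) hcent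
    have hwint : (∫ t in m..v, (t - m)) = (v - u) ^ 2 / 8 := by
      have he : (fun t : ℝ => t - m) = fun t => (-m + 1 * t + 0 * t ^ 2) := by funext t; ring
      rw [he, integral_quadratic, hm]; ring
    rw [hwint] at hJ
    exact hJ
  calc |(∫ t in u..m, (t - m) * f' t) + ∫ t in m..v, (t - m) * f' t|
      ≤ |∫ t in u..m, (t - m) * f' t| + |∫ t in m..v, (t - m) * f' t| := abs_add_le _ _
    _ ≤ (v - u) ^ 2 / 8 * |f' ((5 * u + v) / 6)| + (v - u) ^ 2 / 8 * |f' ((u + 5 * v) / 6)| := by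
        have := habs1.trans hj1
        have := habs2.trans hj2
        linarith
    _ = (v - u) ^ 2 / 8 * (|f' ((5 * u + v) / 6)| + |f' ((u + 5 * v) / 6)|) := by ring

private lemma abs_deriv_concave (f' : ℝ → ℝ) (a b q : ℝ) (hq : 1 ≤ q)
    (hconc : ConcaveOn ℝ (Set.Icc a b) (fun y => |f' y| ^ q)) :
    ConcaveOn ℝ (Set.Icc a b) (fun y => |f' y|) := by
  have hq0 : 0 < q := lt_of_lt_of_le one_pos hq
  have hrec : ∀ z : ℝ, (|z| ^ q) ^ (1 / q) = |z| := by
    intro z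
    rw [← Real.rpow_mul (abs_nonneg z), mul_one_div, div_self hq0.ne', Real.rpow_one]
  refine ⟨convex_Icc a b, ?_⟩
  intro y hy z hz α β hα hβ hαβ
  have h1 := hconc.2 hy hz hα hβ hαβ
  simp only [smul_eq_mul] at h1 ⊢
  have h2 : ((α * |f' y| ^ q + β * |f' z| ^ q)) ^ (1 / q)
      ≤ (|f' (α * y + β * z)| ^ q) ^ (1 / q) :=
    Real.rpow_le_rpow (by positivity) h1 (by positivity)
  rw [hrec] at h2
  have h4 := (Real.concaveOn_rpow (le_of_lt (by positivity : (0:ℝ) < 1 / q))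
      (by rw [div_le_one hq0]; exact hq)).2
    (Set.mem_Ici.2 (by positivity : (0:ℝ) ≤ |f' y| ^ q))
    (Set.mem_Ici.2 (by positivity : (0:ℝ) ≤ |f' z| ^ q)) hα hβ hαβ
  simp only [smul_eq_mul, hrec] at h4
  exact le_trans h4 h2

theorem prop_4_3 (f f' : ℝ → ℝ) (a b c d : ℝ) (hab : a < b)
    (hca : c < a) (hbd : b < d)
    (hf : ∀ y ∈ Set.Ioo c d, HasDerivAt f (f' y) y)
    (hint : IntervalIntegrable f' volume a b)
    (q : ℝ) (hq : 1 ≤ q)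
    (hconc : ConcaveOn ℝ (Set.Icc a b) (fun y => |f' y| ^ q))
    (n : ℕ) (x : ℕ → ℝ) (hx0 : x 0 = a) (hxn : x n = b)
    (hmono : ∀ i < n, x i < x (i + 1)) :
    |(∫ u in a..b, f u) - ∑ i ∈ Finset.range n,
        (f (x i) + f (x (i + 1))) / 2 * (x (i + 1) - x i)|
      ≤ (1 / 8) *
        ∑ i ∈ Finset.range n,
          (x (i + 1) - x i) ^ 2 *
            (|f' ((5 * x i + x (i + 1)) / 6)| + |f' ((x i + 5 * x (i + 1)) / 6)|) := by
  have hg := abs_deriv_concave f' a b q hq hconc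
  have hmle : ∀ i j : ℕ, i ≤ j → j ≤ n → x i ≤ x j := by
    intro i j hij hjn
    induction j with
    | zero => have : i = 0 := Nat.le_zero.mp hij; simp [this]
    | succ k ih =>
      rcases Nat.lt_or_ge i (k + 1) with h | h
      · exact le_trans (ih (Nat.lt_succ_iff.mp h) (by omega)) (hmono k (by omega)).le
      · have : i = k + 1 := le_antisymm hij h
        simp [this]
  have hmem : ∀ i, i ≤ n → a ≤ x i ∧ x i ≤ b := fun i hi =>
    ⟨hx0 ▸ hmle 0 i (Nat.zero_le i) hi, hxn ▸ hmle i n hi le_rfl⟩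
  have hfc : ContinuousOn f (Set.Icc a b) := fun t ht =>
    ((hf t ⟨by linarith [ht.1], by linarith [ht.2]⟩).continuousAt).continuousWithinAt
  have hint_i : ∀ k, k < n → IntervalIntegrable f volume (x k) (x (k + 1)) := by
    intro k hk
    apply ContinuousOn.intervalIntegrable
    apply hfc.mono
    rw [Set.uIcc_of_le (hmono k hk).le]
    exact Set.Icc_subset_Icc (hmem k hk.le).1 (hmem (k + 1) hk).2
  have hsum := intervalIntegral.sum_integral_adjacent_intervals hint_i
  rw [hx0, hxn] at hsum
  rw [← hsum, ← Finset.sum_sub_distrib]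
  refine (Finset.abs_sum_le_sum_abs _ _).trans ?_
  rw [Finset.mul_sum]
  apply Finset.sum_le_sum
  intro i hi
  have hi' : i < n := Finset.mem_range.mp hi
  have hest := trap_est f f' a b c d (x i) (x (i + 1)) hca hbd hf hint hg
    (hmem i hi'.le).1 (hmono i hi') (hmem (i + 1) hi').2
  refine hest.trans_eq ?_
  ring
end
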